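/- arXiv:2111.09375 — 2 statements merged into one kernel-verified Lean document; each statement's English description precedes it below -/
import Mathlib

section
/- Let μ = μ₁⊗⋯⊗μ_k be a product probability measure and let f : V → ℝ have degree at most d. Then ‖f‖₄⁴ ≤ 2·9^d · Σ_{T⊆[k], |T|≤d} (9d)^{|T|} · E_{x∼μ_T}[(I_{T,x}[f])²]. -/
open Finset

namespace GLL

variable {k : ℕ} {V : Fin k → Type} [∀ i, Fintype (V i)] [∀ i, DecidableEq (V i)]

/-- Expectation of `f` with respect to the (finitely supported) measure `μ`. -/
def expect (μ f : (∀ i, V i) → ℝ) : ℝ := ∑ x, μ x * f x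

/-- `μ` is a probability measure. -/
def IsProb (μ : (∀ i, V i) → ℝ) : Prop := (∀ x, 0 ≤ μ x) ∧ ∑ x, μ x = 1

/-- The marginal `μ_S` evaluated at (the `S`-coordinates of) `x`. -/
def marg (μ : (∀ i, V i) → ℝ) (S : Finset (Fin k)) (x : ∀ i, V i) : ℝ :=
  ∑ z, if ∀ i ∈ S, z i = x i then μ z else 0

/-- The link (conditional) measure `μ_x` for `x ∈ V_S`, viewed as a measure on
full points agreeing with `x` on `S`. -/
noncomputable def cond (μ : (∀ i, V i) → ℝ) (S : Finset (Fin k)) (x z : ∀ i, V i) : ℝ :=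
  if ∀ i ∈ S, z i = x i then μ z / marg μ S x else 0

/-- The averaging operator `A_S`: `A_S f (x) = E_{y ∼ μ_{x_S}} [f(x_S, y)]`.
Applied to an `S'`-junta `f`, this is also the operator `A_{S',S}`. -/
noncomputable def Aop (μ : (∀ i, V i) → ℝ) (S : Finset (Fin k)) (f : (∀ i, V i) → ℝ)
    (x : ∀ i, V i) : ℝ :=
  ∑ z, cond μ S x z * f z

/-- The Efron–Stein component `f^{=S} = ∑_{T ⊆ S} (-1)^{|S∖T|} A_T f`. -/
noncomputable def ES (μ : (∀ i, V i) → ℝ) (S : Finset (Fin k)) (f : (∀ i, V i) → ℝ)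
    (x : ∀ i, V i) : ℝ :=
  ∑ T ∈ S.powerset, (-1 : ℝ) ^ (S.card - T.card) * Aop μ T f x

/-- The low-degree part `f^{≤ d} = ∑_{|S| ≤ d} f^{=S}`. -/
noncomputable def lowPart (μ : (∀ i, V i) → ℝ) (d : ℕ) (f : (∀ i, V i) → ℝ)
    (x : ∀ i, V i) : ℝ :=
  ∑ S ∈ univ.powerset.filter (fun S : Finset (Fin k) => S.card ≤ d), ES μ S f x

/-- The Laplacian `L_S[f] = ∑_{T ⊇ S} f^{=T}`. -/
noncomputable def Lap (μ : (∀ i, V i) → ℝ) (S : Finset (Fin k)) (f : (∀ i, V i) → ℝ)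
    (x : ∀ i, V i) : ℝ :=
  ∑ T ∈ univ.powerset.filter (fun T : Finset (Fin k) => S ⊆ T), ES μ T f x

/-- The truncated Laplacian `L_S^{≤d}[f] = ∑_{T ⊇ S, |T| ≤ d} f^{=T}`. -/
noncomputable def LapLe (μ : (∀ i, V i) → ℝ) (d : ℕ) (S : Finset (Fin k))
    (f : (∀ i, V i) → ℝ) (x : ∀ i, V i) : ℝ :=
  ∑ T ∈ univ.powerset.filter (fun T : Finset (Fin k) => S ⊆ T ∧ T.card ≤ d), ES μ T f x

/-- The influence `I_{S,x}[f] = ‖L_S[f](x,·)‖²_{L²(μ_x)}`. -/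
noncomputable def Inf (μ : (∀ i, V i) → ℝ) (S : Finset (Fin k)) (f : (∀ i, V i) → ℝ)
    (x : ∀ i, V i) : ℝ :=
  ∑ z, cond μ S x z * (Lap μ S f z) ^ 2

/-- The truncated influence `I^{≤d}_{S,x}[f] = ‖L_S^{≤d}[f](x,·)‖²_{L²(μ_x)}`. -/
noncomputable def InfLe (μ : (∀ i, V i) → ℝ) (d : ℕ) (S : Finset (Fin k))
    (f : (∀ i, V i) → ℝ) (x : ∀ i, V i) : ℝ :=
  ∑ z, cond μ S x z * (LapLe μ d S f z) ^ 2

/-- `‖f‖₂²` with respect to `μ`. -/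
def normSq (μ f : (∀ i, V i) → ℝ) : ℝ := ∑ x, μ x * (f x) ^ 2

/-- `‖f‖₄⁴` with respect to `μ`. -/
def norm4p4 (μ f : (∀ i, V i) → ℝ) : ℝ := ∑ x, μ x * (f x) ^ 4

/-- `‖f‖₂` with respect to `μ`. -/
noncomputable def l2norm (μ f : (∀ i, V i) → ℝ) : ℝ := Real.sqrt (normSq μ f)

/-- `‖f‖_∞`: the maximum of `|f|` over the support of `μ`. -/
noncomputable def supNorm (μ f : (∀ i, V i) → ℝ) : ℝ :=
  sSup ((fun x => |f x|) '' {x | 0 < μ x})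

/-- Inner product `⟨f, g⟩ = E_{x∼μ}[f(x) g(x)]`. -/
def inner' (μ f g : (∀ i, V i) → ℝ) : ℝ := ∑ x, μ x * (f x * g x)

/-- The pair `{i,j}`-skeleton of `μ` is `ε`-pseudorandom. -/
def PairPseudo (μ : (∀ i, V i) → ℝ) (ε : ℝ) (i j : Fin k) : Prop :=
  ∀ (f₁ : V i → ℝ) (f₂ : V j → ℝ),
    |expect μ (fun x => f₁ (x i) * f₂ (x j)) -
        expect μ (fun x => f₁ (x i)) * expect μ (fun x => f₂ (x j))| ≤
      ε * Real.sqrt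
        ((expect μ (fun x => f₁ (x i) ^ 2) - expect μ (fun x => f₁ (x i)) ^ 2) *
          (expect μ (fun x => f₂ (x j) ^ 2) - expect μ (fun x => f₂ (x j)) ^ 2))

/-- `μ` is an `ε`-product measure: every link of every restriction of size `≤ k - 2`
has `ε`-pseudorandom skeletons. -/
def EpsProduct (μ : (∀ i, V i) → ℝ) (ε : ℝ) : Prop :=
  ∀ S : Finset (Fin k), S.card ≤ k - 2 → ∀ x, 0 < marg μ S x →
    ∀ i j : Fin k, i ∉ S → j ∉ S → i ≠ j → PairPseudo (cond μ S x) ε i j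

/-- `‖f(x,·)‖_{L²(μ_x)}` for `x ∈ V_S`. -/
noncomputable def restrictNorm (μ : (∀ i, V i) → ℝ) (S : Finset (Fin k)) (x : ∀ i, V i)
    (f : (∀ i, V i) → ℝ) : ℝ :=
  Real.sqrt (∑ z, cond μ S x z * (f z) ^ 2)

/-- `f` is `(d, δ)`-global: all restrictions of at most `d` coordinates have
`2`-norm at most `δ`. -/
def IsGlobal (μ : (∀ i, V i) → ℝ) (d : ℕ) (δ : ℝ) (f : (∀ i, V i) → ℝ) : Prop :=
  ∀ S : Finset (Fin k), S.card ≤ d → ∀ x, 0 < marg μ S x → restrictNorm μ S x f ≤ δ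

/-- `f` is an `S`-junta: it depends only on the coordinates in `S`. -/
def Junta (S : Finset (Fin k)) (f : (∀ i, V i) → ℝ) : Prop :=
  ∀ x y, (∀ i ∈ S, x i = y i) → f x = f y

/-- The noise operator `T_ρ f = ∑_{S ⊆ [k]} ρ^{|S|} (1-ρ)^{k-|S|} A_S f`. -/
noncomputable def noiseOp (μ : (∀ i, V i) → ℝ) (ρ : ℝ) (f : (∀ i, V i) → ℝ)
    (x : ∀ i, V i) : ℝ :=
  ∑ S ∈ (univ : Finset (Fin k)).powerset, ρ ^ S.card * (1 - ρ) ^ (k - S.card) * Aop μ S f x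

/-- The up-down walk operator `T = (1/k) ∑_{i=1}^k A_{[k]∖{i}}`. -/
noncomputable def upDown (μ : (∀ i, V i) → ℝ) (f : (∀ i, V i) → ℝ) (x : ∀ i, V i) : ℝ :=
  (1 / (k : ℝ)) * ∑ i : Fin k, Aop μ (univ.erase i) f x

/-- The product measure `μ₁ ⊗ ⋯ ⊗ μ_k`. -/
def prodMeasure (μi : ∀ i, V i → ℝ) : (∀ i, V i) → ℝ := fun x => ∏ i, μi i (x i)

/-- `f` has degree at most `d`: `f^{=S} = 0` whenever `|S| > d`. -/
def DegLe (μ : (∀ i, V i) → ℝ) (d : ℕ) (f : (∀ i, V i) → ℝ) : Prop :=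
  ∀ S : Finset (Fin k), d < S.card → ∀ x, ES μ S f x = 0

/-- `{F S}_{S ⊆ [k]}` is an `(α, ε')`-approximate Efron–Stein decomposition of `f`. -/
noncomputable def ApproxES (μ : (∀ i, V i) → ℝ) (α ε' : ℝ) (f : (∀ i, V i) → ℝ)
    (F : Finset (Fin k) → (∀ i, V i) → ℝ) : Prop :=
  l2norm μ f ≤ α ∧
    l2norm μ (fun x => f x - ∑ S ∈ (univ : Finset (Fin k)).powerset, F S x) ≤ ε' ∧
    ∀ S : Finset (Fin k), ∃ h : (∀ i, V i) → ℝ,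
      l2norm μ h ≤ α ∧ l2norm μ (fun x => ES μ S h x - F S x) ≤ ε'

end GLL

/-!
The degree hypothesis only constrains `f` on the support of `prodMeasure μi`, so `f` is replaced
by its truncation to Efron–Stein degree `≤ d`, which agrees with `f` there.

By Parseval, `‖f‖₄⁴ = ∑_S ‖(f²)^{=S}‖²`. For fixed `S` write `f = ∑_{U ⊆ S} F_U`, where `F_U`
collects the components `f^{=T}` with `T ∩ S = U`. Since `F_U` depends only on the coordinates in
`Sᶜ ∪ U`, `(F_{U₁} F_{U₂})^{=S}` vanishes unless `U₁ ∪ U₂ = S`, and otherwise, with `R = U₁ ∩ U₂`,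
`‖(F_{U₁} F_{U₂})^{=S}‖² ≤ ‖A_S (F_{U₁} F_{U₂})‖² ≤ ⟨A_S F_{U₁}², A_S F_{U₂}²⟩`
`= ⟨A_R F_{U₁}², A_R F_{U₂}²⟩`.
A weighted Cauchy–Schwarz over the pairs `(U₁, U₂)`, with weights `η^{|U₁|+|U₂|}` summing to
`(2η + η²)^{|S|}`, and the orthogonality relations `A_R F_U² = ∑_{T ∩ S = U} A_R (f^{=T})²` and
`I_R = ∑_{T ⊇ R} A_R (f^{=T})²` turn this, after regrouping by `R`, into
`‖f‖₄⁴ ≤ ∑_R ((2 + η)/η)^{|R|} (3 + η)^{2(d - |R|)} E[I_R²]`. Finally take `η = 1/d`.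
-/

namespace GLL

section InnerProduct

variable {k : ℕ} {V : Fin k → Type} [∀ i, Fintype (V i)] (μ : (∀ i, V i) → ℝ)

lemma inner'_comm (f g : (∀ i, V i) → ℝ) : inner' μ f g = inner' μ g f := by
  simp only [inner', mul_comm (f _)]

lemma inner'_sum_left {ι : Type*} (s : Finset ι) (F : ι → (∀ i, V i) → ℝ)
    (g : (∀ i, V i) → ℝ) :
    inner' μ (fun x => ∑ p ∈ s, F p x) g = ∑ p ∈ s, inner' μ (F p) g := by
  simp only [inner', sum_mul, mul_sum]
  exact sum_comm

lemma inner'_sum_right {ι : Type*} (s : Finset ι) (F : ι → (∀ i, V i) → ℝ)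
    (g : (∀ i, V i) → ℝ) :
    inner' μ g (fun x => ∑ p ∈ s, F p x) = ∑ p ∈ s, inner' μ g (F p) := by
  simp only [inner'_comm μ g, inner'_sum_left]

lemma inner'_const_mul_left (c : ℝ) (f g : (∀ i, V i) → ℝ) :
    inner' μ (fun x => c * f x) g = c * inner' μ f g := by
  simp only [inner', mul_sum]
  exact sum_congr rfl fun x _ => by ring

variable {μ}

lemma inner'_nonneg (hμ : ∀ x, 0 ≤ μ x) {f g : (∀ i, V i) → ℝ} (hf : ∀ x, 0 ≤ f x)
    (hg : ∀ x, 0 ≤ g x) : 0 ≤ inner' μ f g :=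
  sum_nonneg fun x _ => mul_nonneg (hμ x) (mul_nonneg (hf x) (hg x))

lemma inner'_self_nonneg (hμ : ∀ x, 0 ≤ μ x) (f : (∀ i, V i) → ℝ) : 0 ≤ inner' μ f f :=
  sum_nonneg fun x _ => mul_nonneg (hμ x) (mul_self_nonneg _)

lemma inner'_sum_self_le (hμ : ∀ x, 0 ≤ μ x) {ι : Type*} (s : Finset ι)
    (v : ι → (∀ i, V i) → ℝ) {w : ι → ℝ} (hw : ∀ p ∈ s, 0 < w p) :
    inner' μ (fun x => ∑ p ∈ s, v p x) (fun x => ∑ p ∈ s, v p x)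
      ≤ (∑ p ∈ s, w p) * ∑ p ∈ s, inner' μ (v p) (v p) / w p := by
  have pointwise : ∀ x, (∑ p ∈ s, v p x) * (∑ p ∈ s, v p x)
      ≤ (∑ p ∈ s, w p) * ∑ p ∈ s, v p x * v p x / w p := fun x =>
    sq (∑ p ∈ s, v p x) ▸ sum_sq_le_sum_mul_sum_of_sq_le_mul s
      (fun p hp => (hw p hp).le) (fun p hp => div_nonneg (mul_self_nonneg _) (hw p hp).le)
      fun p hp => by rw [mul_div_cancel₀ _ (hw p hp).ne', sq]
  calc inner' μ (fun x => ∑ p ∈ s, v p x) (fun x => ∑ p ∈ s, v p x)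
      ≤ ∑ x, μ x * ((∑ p ∈ s, w p) * ∑ p ∈ s, v p x * v p x / w p) :=
        sum_le_sum fun x _ => mul_le_mul_of_nonneg_left (pointwise x) (hμ x)
    _ = _ := by
        simp only [inner', sum_div, mul_sum]
        rw [sum_comm]
        exact sum_congr rfl fun p _ => sum_congr rfl fun x _ => by ring

lemma expect_congr {a b : (∀ i, V i) → ℝ} (h : ∀ x, μ x ≠ 0 → a x = b x) :
    expect μ a = expect μ b :=
  sum_congr rfl fun x _ => by
    by_cases hx : μ x = 0
    · simp [hx]
    · rw [h x hx]

end InnerProduct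

section Combinatorics

variable {α : Type*} [DecidableEq α]

lemma neg_one_pow_sub_of_le {R : Type*} [CommRing R] {m n : ℕ} (h : n ≤ m) :
    (-1 : R) ^ (m - n) = (-1) ^ m * (-1) ^ n := by
  obtain ⟨j, rfl⟩ := Nat.exists_eq_add_of_le h
  rw [Nat.add_sub_cancel_left, pow_add, mul_right_comm, ← pow_add, ← two_mul, pow_mul,
    neg_one_sq, one_pow, one_mul]

lemma sum_powerset_neg_one_pow_mul_eq_zero {R : Type*} [CommRing R] {s : Finset α} {i : α}
    (hi : i ∈ s) {F : Finset α → R} (hF : ∀ T, i ∉ T → F (insert i T) = F T) :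
    ∑ T ∈ s.powerset, (-1 : R) ^ #T * F T = 0 := by
  rw [← insert_erase hi, sum_powerset_insert (notMem_erase i s), ← sum_add_distrib]
  refine sum_eq_zero fun T hT => ?_
  have hiT : i ∉ T := fun h => notMem_erase i s (mem_powerset.1 hT h)
  rw [card_insert_of_notMem hiT, hF T hiT, pow_succ]
  ring

lemma sum_powerset_union_of_disjoint {β : Type*} [AddCommMonoid β] {s t : Finset α}
    (h : Disjoint s t) (f : Finset α → β) :
    ∑ u ∈ (s ∪ t).powerset, f u = ∑ a ∈ s.powerset, ∑ b ∈ t.powerset, f (a ∪ b) := by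
  induction t using Finset.induction_on generalizing f with
  | empty => simp
  | insert x t hx ih =>
    have hxs : x ∉ s := disjoint_right.1 h (mem_insert_self x t)
    have h' := disjoint_of_subset_right (subset_insert x t) h
    rw [union_insert, sum_powerset_insert (by simp [hx, hxs]), ih h', ih h',
      ← sum_add_distrib]
    refine sum_congr rfl fun a _ => ?_
    simp only [sum_powerset_insert hx, union_insert]

def unionPairs (S : Finset α) : Finset (Finset α × Finset α) :=
  (S.powerset ×ˢ S.powerset).filter fun p => p.1 ∪ p.2 = S

lemma mem_unionPairs {S : Finset α} {p : Finset α × Finset α} :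
    p ∈ unionPairs S ↔ p.1 ∪ p.2 = S := by
  simp only [unionPairs, mem_filter, mem_product, mem_powerset, and_iff_right_iff_imp]
  rintro rfl
  exact ⟨subset_union_left, subset_union_right⟩

lemma sum_unionPairs_pow {β : Type*} [CommSemiring β] (S : Finset α) (η : β) :
    ∑ p ∈ unionPairs S, η ^ (#p.1 + #p.2) = (2 * η + η ^ 2) ^ #S := by
  rw [unionPairs, sum_filter, sum_product]
  induction S using Finset.induction_on with
  | empty => simp
  | insert a s ha ih =>
    -- `a` lies in `U₁` only, in `U₂` only, or in both: weights `η`, `η` and `η²`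
    have key : ∀ x ∈ s.powerset, ∀ y ∈ s.powerset,
        ((if x ∪ y = insert a s then η ^ (#x + #y) else 0)
          + if x ∪ insert a y = insert a s then η ^ (#x + #(insert a y)) else 0)
        + ((if insert a x ∪ y = insert a s then η ^ (#(insert a x) + #y) else 0)
          + if insert a x ∪ insert a y = insert a s then
              η ^ (#(insert a x) + #(insert a y)) else 0)
        = (2 * η + η ^ 2) * if x ∪ y = s then η ^ (#x + #y) else 0 := by
      intro x hx y hy
      rw [mem_powerset] at hx hy
      have hax : a ∉ x := fun h => ha (hx h)
      have hay : a ∉ y := fun h => ha (hy h)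
      have hxy : a ∉ x ∪ y := by simp [hax, hay]
      have hne : x ∪ y ≠ insert a s := fun h => hxy (h ▸ mem_insert_self a s)
      have hiff : insert a (x ∪ y) = insert a s ↔ x ∪ y = s :=
        ⟨fun h => by rw [← erase_insert hxy, h, erase_insert ha], by rintro rfl; rfl⟩
      simp only [union_insert, insert_union, insert_idem, hiff, if_neg hne,
        card_insert_of_notMem hax, card_insert_of_notMem hay]
      split_ifs <;> ring
    simp only [sum_powerset_insert ha, ← sum_add_distrib]
    rw [sum_congr rfl fun x hx => sum_congr rfl fun y hy => key x hx y hy]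
    simp only [← mul_sum]
    rw [ih, card_insert_of_notMem ha]
    ring

lemma sum_powerset_pow_card_mul_inter {β : Type*} [CommSemiring β] {A B : Finset α}
    (hAB : A ⊆ B) (a : β) (G : Finset α → β) :
    ∑ S ∈ B.powerset, a ^ #S * G (S ∩ A)
      = (a + 1) ^ #(B \ A) * ∑ R ∈ A.powerset, a ^ #R * G R := by
  rw [← union_sdiff_of_subset hAB, sum_powerset_union_of_disjoint disjoint_sdiff,
    union_sdiff_of_subset hAB, mul_sum]
  refine sum_congr rfl fun R hR => ?_
  rw [mem_powerset] at hR
  have hinter : ∀ E ∈ (B \ A).powerset, (R ∪ E) ∩ A = R := fun E hE => by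
    rw [union_inter_distrib_right, inter_eq_left.2 hR,
      disjoint_iff_inter_eq_empty.1
        (disjoint_of_subset_left (mem_powerset.1 hE) sdiff_disjoint),
      union_empty]
  have hcard : ∀ E ∈ (B \ A).powerset, #(R ∪ E) = #R + #E := fun E hE =>
    card_union_of_disjoint (disjoint_of_subset_left hR
      (disjoint_of_subset_right (mem_powerset.1 hE) disjoint_sdiff))
  have hsum := sum_pow_mul_eq_add_pow a 1 (B \ A)
  simp only [one_pow, mul_one] at hsum
  rw [sum_congr rfl fun E hE => by rw [hinter E hE, hcard E hE, pow_add],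
    ← sum_mul, ← mul_sum, hsum]
  ring

variable [Fintype α]

lemma sum_unionPairs_eq (S : Finset α) {η : ℝ} (hη : η ≠ 0)
    (Q : Finset α → Finset α → Finset α → ℝ) :
    ∑ p ∈ unionPairs S, (2 * η + η ^ 2) ^ #S / η ^ (#p.1 + #p.2) *
        ∑ T₁ with T₁ ∩ S = p.1, ∑ T₂ with T₂ ∩ S = p.2, Q (p.1 ∩ p.2) T₁ T₂
      = ∑ T₁, ∑ T₂, if S ⊆ T₁ ∪ T₂ then
          (2 + η) ^ #S * (Q (S ∩ (T₁ ∩ T₂)) T₁ T₂ / η ^ #(S ∩ (T₁ ∩ T₂))) else 0 := by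
  have hfiber : ∀ p : Finset α × Finset α, (2 * η + η ^ 2) ^ #S / η ^ (#p.1 + #p.2) *
      ∑ T₁ with T₁ ∩ S = p.1, ∑ T₂ with T₂ ∩ S = p.2, Q (p.1 ∩ p.2) T₁ T₂
      = ∑ T₁, ∑ T₂, if (T₁ ∩ S, T₂ ∩ S) = p then
          (2 * η + η ^ 2) ^ #S / η ^ (#p.1 + #p.2) * Q (p.1 ∩ p.2) T₁ T₂ else 0 := by
    intro p
    simp only [sum_filter, mul_sum, Prod.ext_iff, ite_and]
    refine sum_congr rfl fun T₁ _ => ?_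
    split_ifs <;> simp [mul_sum]
  rw [sum_congr rfl fun p _ => hfiber p, sum_comm]
  refine sum_congr rfl fun T₁ _ => ?_
  rw [sum_comm]
  refine sum_congr rfl fun T₂ _ => ?_
  have hunion : T₁ ∩ S ∪ T₂ ∩ S = S ↔ S ⊆ T₁ ∪ T₂ := by
    rw [← union_inter_distrib_right, inter_eq_right]
  have hinter : T₁ ∩ S ∩ (T₂ ∩ S) = S ∩ (T₁ ∩ T₂) := by
    ext; simp only [mem_inter]; tauto
  simp only [sum_ite_eq, mem_unionPairs, hunion, hinter]
  split_ifs with hS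
  · have hcard : #(T₁ ∩ S) + #(T₂ ∩ S) = #S + #(S ∩ (T₁ ∩ T₂)) := by
      rw [← card_union_add_card_inter, hunion.2 hS, hinter]
    rw [hcard, show 2 * η + η ^ 2 = η * (2 + η) by ring, mul_pow, pow_add]
    field_simp
  · rfl

lemma sum_sum_unionPairs_le {η : ℝ} (hη : 0 < η) (d : ℕ)
    (Q : Finset α → Finset α → Finset α → ℝ) (hQ : ∀ R T₁ T₂, 0 ≤ Q R T₁ T₂)
    (hQd : ∀ R T₁ T₂, d < #T₁ ∨ d < #T₂ → Q R T₁ T₂ = 0) :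
    ∑ S, ∑ p ∈ unionPairs S, (2 * η + η ^ 2) ^ #S / η ^ (#p.1 + #p.2) *
        ∑ T₁ with T₁ ∩ S = p.1, ∑ T₂ with T₂ ∩ S = p.2, Q (p.1 ∩ p.2) T₁ T₂
      ≤ ∑ R with #R ≤ d, ((2 + η) / η) ^ #R * (3 + η) ^ (2 * (d - #R)) *
          ∑ T₁ with R ⊆ T₁, ∑ T₂ with R ⊆ T₂, Q R T₁ T₂ := by
  calc _ = ∑ T₁, ∑ T₂, (3 + η) ^ #((T₁ ∪ T₂) \ (T₁ ∩ T₂)) *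
          ∑ R ∈ (T₁ ∩ T₂).powerset, (2 + η) ^ #R * (Q R T₁ T₂ / η ^ #R) := by
        simp only [sum_unionPairs_eq _ hη.ne']
        rw [sum_comm]
        refine sum_congr rfl fun T₁ _ => ?_
        rw [sum_comm]
        refine sum_congr rfl fun T₂ _ => ?_
        rw [← sum_filter, filter_subset_univ]
        convert sum_powerset_pow_card_mul_inter inter_subset_union (2 + η)
          (fun R => Q R T₁ T₂ / η ^ #R) using 2
        ring
    _ ≤ ∑ T₁, ∑ T₂, ∑ R ∈ (T₁ ∩ T₂).powerset,
          ((2 + η) / η) ^ #R * (3 + η) ^ (2 * (d - #R)) * Q R T₁ T₂ := by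
        refine sum_le_sum fun T₁ _ => sum_le_sum fun T₂ _ => ?_
        rw [mul_sum]
        refine sum_le_sum fun R hR => ?_
        by_cases hd : d < #T₁ ∨ d < #T₂
        · simp [hQd R T₁ T₂ hd]
        have hcard : #((T₁ ∪ T₂) \ (T₁ ∩ T₂)) ≤ 2 * (d - #R) := by
          have := card_union_add_card_inter T₁ T₂
          have := card_le_card (mem_powerset.1 hR)
          rw [card_sdiff_of_subset inter_subset_union]
          omega
        calc (3 + η) ^ #((T₁ ∪ T₂) \ (T₁ ∩ T₂)) * ((2 + η) ^ #R * (Q R T₁ T₂ / η ^ #R))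
            = ((2 + η) / η) ^ #R * (3 + η) ^ #((T₁ ∪ T₂) \ (T₁ ∩ T₂)) * Q R T₁ T₂ := by
              rw [div_pow]; ring
          _ ≤ _ := mul_le_mul_of_nonneg_right (mul_le_mul_of_nonneg_left
              (pow_le_pow_right₀ (by linarith) hcard) (by positivity)) (hQ R T₁ T₂)
    _ = ∑ R, ((2 + η) / η) ^ #R * (3 + η) ^ (2 * (d - #R)) *
          ∑ T₁ with R ⊆ T₁, ∑ T₂ with R ⊆ T₂, Q R T₁ T₂ := by
        simp only [← filter_subset_univ, sum_filter, mul_sum, subset_inter_iff, ite_and]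
        rw [sum_congr rfl fun T₁ _ => sum_comm, sum_comm]
        refine sum_congr rfl fun R _ => sum_congr rfl fun T₁ _ => ?_
        split_ifs <;> simp [mul_sum]
    _ = _ := by
        refine (sum_filter_of_ne fun R _ hR => ?_).symm
        by_contra hRd
        refine hR (mul_eq_zero_of_right _ (sum_eq_zero fun T₁ hT₁ => ?_))
        exact sum_eq_zero fun T₂ _ => hQd R T₁ T₂ (Or.inl
          ((not_le.1 hRd).trans_le (card_le_card (mem_filter.1 hT₁).2)))

end Combinatorics

section ProductKernel

variable {k : ℕ} {V : Fin k → Type} {μi : ∀ i, V i → ℝ}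

lemma prodMeasure_nonneg (hnn : ∀ i a, 0 ≤ μi i a) (x : ∀ i, V i) : 0 ≤ prodMeasure μi x :=
  prod_nonneg fun i _ => hnn i (x i)

variable [∀ i, DecidableEq (V i)]

/-- The law of a point that agrees with `x` on `W` and is drawn from `μi` elsewhere. Together with
`avg`, `esComp`, `laplacian` and `influence` below it gives division-free versions of `cond`,
`Aop`, `ES`, `Lap` and `Inf` for `prodMeasure μi`, which agree with those on the support
(`cond_prodMeasure`) but, unlike them, satisfy `A_W A_T = A_{W ∩ T}` at every point. -/
def condKernel (μi : ∀ i, V i → ℝ) (W : Finset (Fin k)) (x z : ∀ i, V i) : ℝ :=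
  ∏ i, if i ∈ W then (if z i = x i then 1 else 0) else μi i (z i)

lemma condKernel_nonneg (hnn : ∀ i a, 0 ≤ μi i a) (W : Finset (Fin k)) (x z : ∀ i, V i) :
    0 ≤ condKernel μi W x z :=
  prod_nonneg fun i _ => by split_ifs <;> simp [hnn]

lemma condKernel_eq_zero {W : Finset (Fin k)} {x z : ∀ i, V i} (h : ¬∀ i ∈ W, z i = x i) :
    condKernel μi W x z = 0 := by
  simp only [not_forall] at h
  obtain ⟨i, hiW, hne⟩ := h
  exact prod_eq_zero (mem_univ i) (by simp [hiW, hne])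

lemma condKernel_congr {W : Finset (Fin k)} {x y : ∀ i, V i} (h : ∀ i ∈ W, x i = y i)
    (z : ∀ i, V i) : condKernel μi W x z = condKernel μi W y z :=
  prod_congr rfl fun i _ => by by_cases hi : i ∈ W <;> simp [hi, h i]

lemma prodMeasure_mul_condKernel (W : Finset (Fin k)) (x z : ∀ i, V i) :
    prodMeasure μi x * condKernel μi W x z = prodMeasure μi z * condKernel μi W z x := by
  simp only [prodMeasure, condKernel, ← prod_mul_distrib]
  refine prod_congr rfl fun i _ => ?_
  by_cases hi : i ∈ W
  · by_cases he : z i = x i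
    · simp [hi, he]
    · simp [hi, he, Ne.symm he]
  · simp [hi, mul_comm]

variable [∀ i, Fintype (V i)]

lemma sum_condKernel (hsum : ∀ i, ∑ a, μi i a = 1) (W : Finset (Fin k)) (x : ∀ i, V i) :
    ∑ z, condKernel μi W x z = 1 := by
  simp only [condKernel]
  rw [← Fintype.prod_sum fun i (a : V i) =>
    if i ∈ W then (if a = x i then (1 : ℝ) else 0) else μi i a]
  exact prod_eq_one fun i _ => by by_cases hi : i ∈ W <;> simp [hi, hsum i]

lemma sum_condKernel_mul_condKernel (hsum : ∀ i, ∑ a, μi i a = 1) (W T : Finset (Fin k))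
    (x u : ∀ i, V i) :
    ∑ z, condKernel μi W x z * condKernel μi T z u = condKernel μi (W ∩ T) x u := by
  simp only [condKernel, ← prod_mul_distrib]
  rw [← Fintype.prod_sum fun i (a : V i) =>
    (if i ∈ W then (if a = x i then (1 : ℝ) else 0) else μi i a) *
      if i ∈ T then (if u i = a then 1 else 0) else μi i (u i)]
  refine prod_congr rfl fun i _ => ?_
  by_cases h₁ : i ∈ W <;> by_cases h₂ : i ∈ T <;> simp [h₁, h₂, ← sum_mul, hsum i]

def avg (μi : ∀ i, V i → ℝ) (W : Finset (Fin k)) (f : (∀ i, V i) → ℝ) (x : ∀ i, V i) : ℝ :=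
  ∑ z, condKernel μi W x z * f z

def esComp (μi : ∀ i, V i → ℝ) (S : Finset (Fin k)) (f : (∀ i, V i) → ℝ) (x : ∀ i, V i) : ℝ :=
  ∑ T ∈ S.powerset, (-1 : ℝ) ^ (#S - #T) * avg μi T f x

def laplacian (μi : ∀ i, V i → ℝ) (R : Finset (Fin k)) (f : (∀ i, V i) → ℝ)
    (x : ∀ i, V i) : ℝ :=
  ∑ T with R ⊆ T, esComp μi T f x

def influence (μi : ∀ i, V i → ℝ) (R : Finset (Fin k)) (f : (∀ i, V i) → ℝ)
    (x : ∀ i, V i) : ℝ :=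
  avg μi R (fun z => laplacian μi R f z ^ 2) x

lemma avg_avg (hsum : ∀ i, ∑ a, μi i a = 1) (W T : Finset (Fin k)) (f : (∀ i, V i) → ℝ)
    (x : ∀ i, V i) : avg μi W (avg μi T f) x = avg μi (W ∩ T) f x := by
  simp only [avg, mul_sum, ← sum_condKernel_mul_condKernel hsum W T x, sum_mul]
  rw [sum_comm]
  exact sum_congr rfl fun _ _ => sum_congr rfl fun _ _ => by ring

lemma avg_congr {W : Finset (Fin k)} {x y : ∀ i, V i} (h : ∀ i ∈ W, x i = y i)
    (f : (∀ i, V i) → ℝ) : avg μi W f x = avg μi W f y :=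
  sum_congr rfl fun z _ => by rw [condKernel_congr h]

lemma avg_mul_of_agree {W : Finset (Fin k)} {a b : (∀ i, V i) → ℝ} {x : ∀ i, V i}
    (ha : ∀ z, (∀ i ∈ W, z i = x i) → a z = a x) :
    avg μi W (fun z => a z * b z) x = a x * avg μi W b x := by
  rw [avg, avg, mul_sum]
  refine sum_congr rfl fun z _ => ?_
  by_cases h : ∀ i ∈ W, z i = x i
  · rw [ha z h]; ring
  · rw [condKernel_eq_zero h]; ring

lemma avg_of_agree (hsum : ∀ i, ∑ a, μi i a = 1) {W : Finset (Fin k)} {f : (∀ i, V i) → ℝ}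
    {x : ∀ i, V i} (hf : ∀ z, (∀ i ∈ W, z i = x i) → f z = f x) : avg μi W f x = f x := by
  simpa [avg, ← sum_mul, sum_condKernel hsum] using
    avg_mul_of_agree (μi := μi) (b := fun _ => 1) hf

lemma avg_univ (hsum : ∀ i, ∑ a, μi i a = 1) (f : (∀ i, V i) → ℝ) (x : ∀ i, V i) :
    avg μi univ f x = f x :=
  avg_of_agree hsum fun _ hz => congrArg f (funext fun i => hz i (mem_univ i))

lemma avg_sum {ι : Type*} (W : Finset (Fin k)) (s : Finset ι) (F : ι → (∀ i, V i) → ℝ)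
    (x : ∀ i, V i) : avg μi W (fun z => ∑ p ∈ s, F p z) x = ∑ p ∈ s, avg μi W (F p) x := by
  simp only [avg, mul_sum]
  exact sum_comm

lemma avg_const_mul (W : Finset (Fin k)) (c : ℝ) (f : (∀ i, V i) → ℝ) (x : ∀ i, V i) :
    avg μi W (fun z => c * f z) x = c * avg μi W f x := by
  simp only [avg, mul_sum]
  exact sum_congr rfl fun _ _ => by ring

lemma avg_nonneg (hnn : ∀ i a, 0 ≤ μi i a) {W : Finset (Fin k)} {f : (∀ i, V i) → ℝ}
    (hf : ∀ z, 0 ≤ f z) (x : ∀ i, V i) : 0 ≤ avg μi W f x :=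
  sum_nonneg fun z _ => mul_nonneg (condKernel_nonneg hnn W x z) (hf z)

lemma sq_avg_mul_le (hnn : ∀ i a, 0 ≤ μi i a) (W : Finset (Fin k)) (a b : (∀ i, V i) → ℝ)
    (x : ∀ i, V i) :
    avg μi W (fun z => a z * b z) x ^ 2
      ≤ avg μi W (fun z => a z ^ 2) x * avg μi W (fun z => b z ^ 2) x :=
  sum_sq_le_sum_mul_sum_of_sq_le_mul _
    (fun z _ => mul_nonneg (condKernel_nonneg hnn W x z) (sq_nonneg _))
    (fun z _ => mul_nonneg (condKernel_nonneg hnn W x z) (sq_nonneg _))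
    fun _ _ => le_of_eq (by ring)

lemma inner'_avg_left (W : Finset (Fin k)) (f g : (∀ i, V i) → ℝ) :
    inner' (prodMeasure μi) (avg μi W f) g = inner' (prodMeasure μi) f (avg μi W g) := by
  simp only [inner', avg, sum_mul, mul_sum]
  rw [sum_comm]
  refine sum_congr rfl fun z _ => sum_congr rfl fun x _ => ?_
  linear_combination (f z * g x) * prodMeasure_mul_condKernel W x z

lemma inner'_avg_avg (hsum : ∀ i, ∑ a, μi i a = 1) (W T : Finset (Fin k))
    (f g : (∀ i, V i) → ℝ) :
    inner' (prodMeasure μi) (avg μi W f) (avg μi T g)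
      = inner' (prodMeasure μi) (avg μi (W ∩ T) f) (avg μi (W ∩ T) g) := by
  rw [inner'_avg_left, inner'_avg_left]
  congr 1
  funext y
  rw [avg_avg hsum, avg_avg hsum, inter_self]

end ProductKernel

section EfronStein

variable {k : ℕ} {V : Fin k → Type} [∀ i, Fintype (V i)] [∀ i, DecidableEq (V i)]
  {μi : ∀ i, V i → ℝ}

lemma esComp_sum {ι : Type*} (S : Finset (Fin k)) (s : Finset ι) (F : ι → (∀ i, V i) → ℝ)
    (x : ∀ i, V i) : esComp μi S (fun z => ∑ p ∈ s, F p z) x = ∑ p ∈ s, esComp μi S (F p) x := by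
  simp only [esComp, avg_sum, mul_sum]
  exact sum_comm

lemma esComp_congr {S : Finset (Fin k)} {x y : ∀ i, V i} (h : ∀ i ∈ S, x i = y i)
    (f : (∀ i, V i) → ℝ) : esComp μi S f x = esComp μi S f y :=
  sum_congr rfl fun _ hT => by
    rw [avg_congr fun i hi => h i (mem_powerset.1 hT hi)]

lemma sum_powerset_neg_one_pow_mul_avg_inter (W S : Finset (Fin k)) (f : (∀ i, V i) → ℝ)
    (x : ∀ i, V i) :
    ∑ T ∈ S.powerset, (-1 : ℝ) ^ (#S - #T) * avg μi (T ∩ W) f x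
      = if S ⊆ W then esComp μi S f x else 0 := by
  split_ifs with hSW
  · exact sum_congr rfl fun T hT => by
      rw [inter_eq_left.2 ((mem_powerset.1 hT).trans hSW)]
  obtain ⟨i, hiS, hiW⟩ := not_subset.1 hSW
  rw [sum_congr rfl fun T hT => by
      rw [neg_one_pow_sub_of_le (card_le_card (mem_powerset.1 hT)), mul_assoc],
    ← mul_sum, sum_powerset_neg_one_pow_mul_eq_zero hiS fun T _ => by
      rw [insert_inter_of_notMem hiW], mul_zero]

lemma avg_esComp (hsum : ∀ i, ∑ a, μi i a = 1) (W S : Finset (Fin k)) (f : (∀ i, V i) → ℝ)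
    (x : ∀ i, V i) : avg μi W (esComp μi S f) x = if S ⊆ W then esComp μi S f x else 0 := by
  rw [← sum_powerset_neg_one_pow_mul_avg_inter]
  unfold esComp
  rw [avg_sum]
  simp only [avg_const_mul, avg_avg hsum, inter_comm W]

lemma esComp_avg (hsum : ∀ i, ∑ a, μi i a = 1) (S W : Finset (Fin k)) (f : (∀ i, V i) → ℝ)
    (x : ∀ i, V i) : esComp μi S (avg μi W f) x = if S ⊆ W then esComp μi S f x else 0 := by
  rw [← sum_powerset_neg_one_pow_mul_avg_inter]
  simp only [esComp, avg_avg hsum]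

lemma esComp_esComp (hsum : ∀ i, ∑ a, μi i a = 1) (S T : Finset (Fin k))
    (f : (∀ i, V i) → ℝ) (x : ∀ i, V i) :
    esComp μi T (esComp μi S f) x = if S = T then esComp μi S f x else 0 := by
  have hsplit : esComp μi T (esComp μi S f) x
      = ∑ T' ∈ T.powerset, (-1 : ℝ) ^ (#T - #T') * if S ⊆ T' then esComp μi S f x else 0 :=
    sum_congr rfl fun T' _ => by rw [avg_esComp hsum]
  rw [hsplit]
  by_cases hTS : T ⊆ S
  · rcases eq_or_ne S T with rfl | hne
    · rw [sum_eq_single S (fun T' hT' hne => by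
          rw [if_neg fun h => hne (h.antisymm (mem_powerset.1 hT')).symm, mul_zero])
        (by simp), if_pos rfl, if_pos subset_rfl, Nat.sub_self, pow_zero, one_mul]
    · rw [if_neg hne]
      exact sum_eq_zero fun T' hT' => by
        rw [if_neg fun h => hne ((h.trans (mem_powerset.1 hT')).antisymm hTS), mul_zero]
  · obtain ⟨i, hiT, hiS⟩ := not_subset.1 hTS
    rw [if_neg (by rintro rfl; exact hiS hiT), sum_congr rfl fun T' hT' => by
        rw [neg_one_pow_sub_of_le (card_le_card (mem_powerset.1 hT')), mul_assoc],
      ← mul_sum, sum_powerset_neg_one_pow_mul_eq_zero hiT fun T' _ => by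
        simp only [subset_insert_iff_of_notMem hiS], mul_zero]

lemma sum_esComp (hsum : ∀ i, ∑ a, μi i a = 1) (f : (∀ i, V i) → ℝ) (x : ∀ i, V i) :
    ∑ S, esComp μi S f x = f x := by
  have hsuper : ∀ T : Finset (Fin k),
      ∑ S, (if T ⊆ S then (-1 : ℝ) ^ (#S - #T) * avg μi T f x else 0)
        = if T = univ then f x else 0 := by
    intro T
    split_ifs with hT
    · subst hT
      rw [sum_eq_single univ
          (fun S _ hS => if_neg fun h => hS (univ_subset_iff.1 h)) (by simp),
        if_pos subset_rfl, Nat.sub_self, pow_zero, one_mul, avg_univ hsum]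
    obtain ⟨i, hi⟩ := not_forall.1 (mt eq_univ_iff_forall.2 hT)
    have hsign : ∀ S, (if T ⊆ S then (-1 : ℝ) ^ (#S - #T) * avg μi T f x else 0)
        = (-1) ^ #S * if T ⊆ S then (-1) ^ #T * avg μi T f x else 0 := fun S => by
      split_ifs with h
      · rw [neg_one_pow_sub_of_le (card_le_card h)]; ring
      · rw [mul_zero]
    rw [sum_congr rfl fun S _ => hsign S, ← powerset_univ,
      sum_powerset_neg_one_pow_mul_eq_zero (mem_univ i) fun S _ => by
        simp only [subset_insert_iff_of_notMem hi]]
  simp only [esComp, ← filter_subset_univ, sum_filter]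
  rw [sum_comm, sum_congr rfl fun T _ => hsuper T, sum_ite_eq']
  simp

lemma inner'_esComp_left (S : Finset (Fin k)) (f g : (∀ i, V i) → ℝ) :
    inner' (prodMeasure μi) (esComp μi S f) g = inner' (prodMeasure μi) f (esComp μi S g) := by
  have hexpand : ∀ f g : (∀ i, V i) → ℝ, inner' (prodMeasure μi) (esComp μi S f) g
      = ∑ T ∈ S.powerset, (-1 : ℝ) ^ (#S - #T) * inner' (prodMeasure μi) (avg μi T f) g :=
    fun f g => by
      unfold esComp
      simp only [inner'_sum_left, inner'_const_mul_left]
  rw [inner'_comm _ f, hexpand, hexpand]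
  simp only [inner'_avg_left, inner'_comm _ f]

lemma inner'_esComp_self (hsum : ∀ i, ∑ a, μi i a = 1) (S : Finset (Fin k))
    (f : (∀ i, V i) → ℝ) :
    inner' (prodMeasure μi) (esComp μi S f) (esComp μi S f)
      = inner' (prodMeasure μi) (esComp μi S f) f := by
  rw [inner'_esComp_left, inner'_comm]
  congr 1
  funext x
  rw [esComp_esComp hsum, if_pos rfl]

lemma inner'_self_eq_sum_esComp (hsum : ∀ i, ∑ a, μi i a = 1) (f : (∀ i, V i) → ℝ) :
    inner' (prodMeasure μi) f f
      = ∑ S, inner' (prodMeasure μi) (esComp μi S f) (esComp μi S f) := by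
  nth_rw 1 [← funext (sum_esComp hsum f)]
  rw [inner'_sum_left]
  simp only [inner'_esComp_self hsum]

lemma inner'_esComp_self_le (hnn : ∀ i a, 0 ≤ μi i a) (hsum : ∀ i, ∑ a, μi i a = 1)
    (S : Finset (Fin k)) (f : (∀ i, V i) → ℝ) :
    inner' (prodMeasure μi) (esComp μi S f) (esComp μi S f) ≤ inner' (prodMeasure μi) f f := by
  rw [inner'_self_eq_sum_esComp hsum f]
  exact single_le_sum (f := fun T => inner' (prodMeasure μi) (esComp μi T f) (esComp μi T f))
    (fun T _ => inner'_self_nonneg (prodMeasure_nonneg hnn) _) (mem_univ S)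

lemma avg_mul_esComp_eq_zero_of_mem (hsum : ∀ i, ∑ a, μi i a = 1) {R T T' : Finset (Fin k)}
    {i : Fin k} (hiT : i ∈ T) (hiT' : i ∉ T') (hRT' : R ⊆ T') (f g : (∀ i, V i) → ℝ)
    (x : ∀ i, V i) : avg μi R (fun z => esComp μi T f z * esComp μi T' g z) x = 0 := by
  -- `A_R = A_R A_{univ.erase i}`, and `A_{univ.erase i}` kills `f^{=T}` but fixes `g^{=T'}`
  have hR : R ∩ univ.erase i = R := inter_eq_left.2 fun j hj =>
    mem_erase.2 ⟨ne_of_mem_of_not_mem (hRT' hj) hiT', mem_univ j⟩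
  have hvanish : avg μi (univ.erase i) (fun z => esComp μi T f z * esComp μi T' g z)
      = fun _ => 0 := by
    funext y
    simp_rw [mul_comm (esComp μi T f _)]
    rw [avg_mul_of_agree fun z hz => esComp_congr (fun j hj => hz j
        (mem_erase.2 ⟨ne_of_mem_of_not_mem hj hiT', mem_univ j⟩)) g,
      avg_esComp hsum, if_neg fun h => (mem_erase.1 (h hiT)).1 rfl, mul_zero]
  rw [← hR, ← avg_avg hsum, hvanish]
  simp [avg]

lemma avg_mul_esComp_eq_zero (hsum : ∀ i, ∑ a, μi i a = 1) {R T T' : Finset (Fin k)}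
    (hne : T ≠ T') (hRT : R ⊆ T) (hRT' : R ⊆ T') (f g : (∀ i, V i) → ℝ) (x : ∀ i, V i) :
    avg μi R (fun z => esComp μi T f z * esComp μi T' g z) x = 0 := by
  obtain ⟨i, hi⟩ := not_forall.1 (mt ext hne)
  by_cases hiT : i ∈ T
  · exact avg_mul_esComp_eq_zero_of_mem hsum hiT (fun h => hi ⟨fun _ => h, fun _ => hiT⟩)
      hRT' f g x
  · simp_rw [mul_comm (esComp μi T f _)]
    exact avg_mul_esComp_eq_zero_of_mem hsum (by tauto) hiT hRT g f x

lemma avg_sq_sum_esComp (hsum : ∀ i, ∑ a, μi i a = 1) {R : Finset (Fin k)}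
    {s : Finset (Finset (Fin k))} (hs : ∀ T ∈ s, R ⊆ T) (g : (∀ i, V i) → ℝ) (x : ∀ i, V i) :
    avg μi R (fun z => (∑ T ∈ s, esComp μi T g z) ^ 2) x
      = ∑ T ∈ s, avg μi R (fun z => esComp μi T g z ^ 2) x := by
  simp only [sq, sum_mul_sum, avg_sum]
  exact sum_congr rfl fun T hT => sum_eq_single T
    (fun T' hT' hne => avg_mul_esComp_eq_zero hsum hne.symm (hs T hT) (hs T' hT') g g x)
    fun h => absurd hT h

lemma influence_eq_sum (hsum : ∀ i, ∑ a, μi i a = 1) (R : Finset (Fin k))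
    (g : (∀ i, V i) → ℝ) (x : ∀ i, V i) :
    influence μi R g x = ∑ T with R ⊆ T, avg μi R (fun z => esComp μi T g z ^ 2) x :=
  avg_sq_sum_esComp hsum (fun _ hT => (mem_filter.1 hT).2) g x

end EfronStein

section Transfer

variable {k : ℕ} {V : Fin k → Type} [∀ i, DecidableEq (V i)] {μi : ∀ i, V i → ℝ}

lemma ite_agree_prodMeasure (S : Finset (Fin k)) (x z : ∀ i, V i) :
    (if ∀ i ∈ S, z i = x i then prodMeasure μi z else 0)
      = (∏ i ∈ S, μi i (x i)) * condKernel μi S x z := by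
  split_ifs with h
  · rw [← univ_inter S, ← prod_ite_mem, prodMeasure, condKernel,
      ← prod_mul_distrib]
    refine prod_congr rfl fun i _ => ?_
    by_cases hi : i ∈ S
    · simp [hi, h i hi]
    · simp [hi]
  · rw [condKernel_eq_zero h, mul_zero]

lemma prodMeasure_ne_zero_of_condKernel_ne_zero {W : Finset (Fin k)} {x z : ∀ i, V i}
    (hx : prodMeasure μi x ≠ 0) (h : condKernel μi W x z ≠ 0) : prodMeasure μi z ≠ 0 :=
  prod_ne_zero_iff.2 fun i _ => by
    have hi := prod_ne_zero_iff.1 h i (mem_univ i)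
    split_ifs at hi with hiW hzx
    · rw [hzx]
      exact prod_ne_zero_iff.1 hx i (mem_univ i)
    · exact absurd rfl hi
    · exact hi

variable [∀ i, Fintype (V i)]

lemma marg_prodMeasure (hsum : ∀ i, ∑ a, μi i a = 1) (S : Finset (Fin k)) (x : ∀ i, V i) :
    marg (prodMeasure μi) S x = ∏ i ∈ S, μi i (x i) := by
  simp only [marg, ite_agree_prodMeasure, ← mul_sum, sum_condKernel hsum, mul_one]

lemma cond_prodMeasure (hsum : ∀ i, ∑ a, μi i a = 1) {x : ∀ i, V i}
    (hx : prodMeasure μi x ≠ 0) (S : Finset (Fin k)) (z : ∀ i, V i) :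
    cond (prodMeasure μi) S x z = condKernel μi S x z := by
  have hmarg : ∏ i ∈ S, μi i (x i) ≠ 0 :=
    prod_ne_zero_iff.2 fun i _ => prod_ne_zero_iff.1 hx i (mem_univ i)
  rw [cond, marg_prodMeasure hsum]
  split_ifs with h
  · have hz := ite_agree_prodMeasure (μi := μi) S x z
    rw [if_pos h] at hz
    rw [hz, mul_div_cancel_left₀ _ hmarg]
  · exact (condKernel_eq_zero h).symm

lemma ES_prodMeasure (hsum : ∀ i, ∑ a, μi i a = 1) {x : ∀ i, V i} (hx : prodMeasure μi x ≠ 0)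
    (S : Finset (Fin k)) (f : (∀ i, V i) → ℝ) : ES (prodMeasure μi) S f x = esComp μi S f x :=
  sum_congr rfl fun T _ => by
    simp only [Aop, avg, cond_prodMeasure hsum hx]

def truncate (μi : ∀ i, V i → ℝ) (d : ℕ) (f : (∀ i, V i) → ℝ) (x : ∀ i, V i) : ℝ :=
  ∑ S with #S ≤ d, esComp μi S f x

lemma esComp_truncate (hsum : ∀ i, ∑ a, μi i a = 1) (d : ℕ) (T : Finset (Fin k))
    (f : (∀ i, V i) → ℝ) (x : ∀ i, V i) :
    esComp μi T (truncate μi d f) x = if #T ≤ d then esComp μi T f x else 0 := by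
  unfold truncate
  rw [esComp_sum]
  simp only [esComp_esComp hsum, sum_ite_eq', mem_filter, mem_univ,
    true_and]

lemma esComp_truncate_eq_zero (hsum : ∀ i, ∑ a, μi i a = 1) {d : ℕ} {T : Finset (Fin k)}
    (hT : d < #T) (f : (∀ i, V i) → ℝ) (x : ∀ i, V i) : esComp μi T (truncate μi d f) x = 0 := by
  rw [esComp_truncate hsum, if_neg (not_le.2 hT)]

lemma truncate_eq (hsum : ∀ i, ∑ a, μi i a = 1) {d : ℕ} {f : (∀ i, V i) → ℝ}
    (hdeg : DegLe (prodMeasure μi) d f) {x : ∀ i, V i} (hx : prodMeasure μi x ≠ 0) :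
    truncate μi d f x = f x := by
  conv_rhs => rw [← sum_esComp hsum f x]
  refine sum_filter_of_ne fun S _ hS => not_lt.1 fun hd => hS ?_
  rw [← ES_prodMeasure hsum hx]
  exact hdeg S hd x

lemma Lap_prodMeasure (hsum : ∀ i, ∑ a, μi i a = 1) {d : ℕ} {f : (∀ i, V i) → ℝ}
    (hdeg : DegLe (prodMeasure μi) d f) {z : ∀ i, V i} (hz : prodMeasure μi z ≠ 0)
    (T : Finset (Fin k)) : Lap (prodMeasure μi) T f z = laplacian μi T (truncate μi d f) z := by
  rw [Lap, laplacian, powerset_univ]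
  refine sum_congr rfl fun T' _ => ?_
  rw [ES_prodMeasure hsum hz, esComp_truncate hsum]
  split_ifs with h
  · rfl
  · rw [← ES_prodMeasure hsum hz]
    exact hdeg T' (not_le.1 h) z

lemma norm4p4_truncate (hsum : ∀ i, ∑ a, μi i a = 1) {d : ℕ} {f : (∀ i, V i) → ℝ}
    (hdeg : DegLe (prodMeasure μi) d f) :
    norm4p4 (prodMeasure μi) (truncate μi d f) = norm4p4 (prodMeasure μi) f :=
  expect_congr fun x hx => by rw [truncate_eq hsum hdeg hx]

lemma Inf_prodMeasure (hsum : ∀ i, ∑ a, μi i a = 1) {d : ℕ} {f : (∀ i, V i) → ℝ}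
    (hdeg : DegLe (prodMeasure μi) d f) {x : ∀ i, V i} (hx : prodMeasure μi x ≠ 0)
    (T : Finset (Fin k)) : Inf (prodMeasure μi) T f x = influence μi T (truncate μi d f) x := by
  refine sum_congr rfl fun z _ => ?_
  rw [cond_prodMeasure hsum hx]
  by_cases hK : condKernel μi T x z = 0
  · simp [hK]
  · rw [Lap_prodMeasure hsum hdeg (prodMeasure_ne_zero_of_condKernel_ne_zero hx hK)]

lemma expect_influence_truncate_sq (hsum : ∀ i, ∑ a, μi i a = 1) {d : ℕ} {f : (∀ i, V i) → ℝ}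
    (hdeg : DegLe (prodMeasure μi) d f) (T : Finset (Fin k)) :
    expect (prodMeasure μi) (fun x => influence μi T (truncate μi d f) x ^ 2)
      = expect (prodMeasure μi) (fun x => Inf (prodMeasure μi) T f x ^ 2) :=
  expect_congr fun x hx => by rw [Inf_prodMeasure hsum hdeg hx T]

end Transfer

section MainInequality

variable {k : ℕ} {V : Fin k → Type} [∀ i, Fintype (V i)] [∀ i, DecidableEq (V i)]
  {μi : ∀ i, V i → ℝ}

def traceComp (μi : ∀ i, V i → ℝ) (g : (∀ i, V i) → ℝ) (S U : Finset (Fin k))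
    (x : ∀ i, V i) : ℝ :=
  ∑ T with T ∩ S = U, esComp μi T g x

lemma sum_traceComp (hsum : ∀ i, ∑ a, μi i a = 1) (g : (∀ i, V i) → ℝ) (S : Finset (Fin k))
    (x : ∀ i, V i) : ∑ U ∈ S.powerset, traceComp μi g S U x = g x := by
  rw [← sum_esComp hsum g x]
  exact sum_fiberwise_of_maps_to
    (fun T _ => mem_powerset.2 inter_subset_right) _

lemma traceComp_congr (g : (∀ i, V i) → ℝ) {S U : Finset (Fin k)} {y z : ∀ i, V i}
    (h : ∀ i ∈ Sᶜ ∪ U, y i = z i) : traceComp μi g S U y = traceComp μi g S U z :=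
  sum_congr rfl fun T hT => esComp_congr (fun j hj => h j <| by
    by_cases hjS : j ∈ S
    · exact mem_union_right _ ((mem_filter.1 hT).2 ▸ mem_inter.2 ⟨hj, hjS⟩)
    · exact mem_union_left _ (mem_compl.2 hjS)) g

lemma esComp_traceComp_mul_eq_zero (hsum : ∀ i, ∑ a, μi i a = 1) (g : (∀ i, V i) → ℝ)
    {S U₁ U₂ : Finset (Fin k)} (hU₁ : U₁ ⊆ S) (hU₂ : U₂ ⊆ S) (hne : U₁ ∪ U₂ ≠ S)
    (x : ∀ i, V i) :
    esComp μi S (fun z => traceComp μi g S U₁ z * traceComp μi g S U₂ z) x = 0 := by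
  have hjunta : (fun z => traceComp μi g S U₁ z * traceComp μi g S U₂ z)
      = avg μi (Sᶜ ∪ (U₁ ∪ U₂)) fun z => traceComp μi g S U₁ z * traceComp μi g S U₂ z :=
    funext fun y => by
      rw [avg_of_agree hsum]
      intro z hz
      rw [traceComp_congr g fun i hi => hz i (by simp only [mem_union] at hi ⊢; tauto),
        traceComp_congr g fun i hi => hz i (by simp only [mem_union] at hi ⊢; tauto)]
  rw [hjunta, esComp_avg hsum, if_neg]
  intro hS
  refine hne ((union_subset hU₁ hU₂).antisymm fun a ha => ?_)
  rcases mem_union.1 (hS ha) with h | h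
  · exact absurd ha (mem_compl.1 h)
  · exact h

lemma esComp_sq_eq_sum_unionPairs (hsum : ∀ i, ∑ a, μi i a = 1) (g : (∀ i, V i) → ℝ)
    (S : Finset (Fin k)) (x : ∀ i, V i) :
    esComp μi S (fun z => g z ^ 2) x
      = ∑ p ∈ unionPairs S,
          esComp μi S (fun z => traceComp μi g S p.1 z * traceComp μi g S p.2 z) x := by
  have hsq : (fun z => g z ^ 2) = fun z =>
      ∑ p ∈ S.powerset ×ˢ S.powerset, traceComp μi g S p.1 z * traceComp μi g S p.2 z :=
    funext fun z => by rw [sq, ← sum_traceComp hsum g S z, sum_mul_sum, sum_product]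
  rw [hsq, esComp_sum, unionPairs, sum_filter_of_ne]
  intro p hp hp0
  by_contra hne
  simp only [mem_product, mem_powerset] at hp
  exact hp0 (esComp_traceComp_mul_eq_zero hsum g hp.1 hp.2 hne x)

lemma avg_traceComp_sq_of_subset (hsum : ∀ i, ∑ a, μi i a = 1) (g : (∀ i, V i) → ℝ)
    {S U : Finset (Fin k)} (hU : U ⊆ S) :
    avg μi S (fun z => traceComp μi g S U z ^ 2)
      = avg μi U (fun z => traceComp μi g S U z ^ 2) := by
  have hjunta : (fun z => traceComp μi g S U z ^ 2)
      = avg μi (Sᶜ ∪ U) fun z => traceComp μi g S U z ^ 2 :=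
    funext fun y => by
      rw [avg_of_agree hsum]
      intro z hz
      rw [traceComp_congr g hz]
  have hinter : S ∩ (Sᶜ ∪ U) = U ∩ (Sᶜ ∪ U) := by
    ext i
    have := @hU i
    simp only [mem_inter, mem_union, mem_compl]
    tauto
  funext y
  rw [hjunta, avg_avg hsum, avg_avg hsum, hinter]

lemma avg_traceComp_sq (hsum : ∀ i, ∑ a, μi i a = 1) (g : (∀ i, V i) → ℝ)
    {S U R : Finset (Fin k)} (hR : R ⊆ U) (x : ∀ i, V i) :
    avg μi R (fun z => traceComp μi g S U z ^ 2) x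
      = ∑ T with T ∩ S = U, avg μi R (fun z => esComp μi T g z ^ 2) x :=
  avg_sq_sum_esComp hsum (s := {T | T ∩ S = U})
    (fun _ hT => hR.trans ((mem_filter.1 hT).2 ▸ inter_subset_left)) g x

lemma inner'_esComp_traceComp_mul_le (hnn : ∀ i a, 0 ≤ μi i a) (hsum : ∀ i, ∑ a, μi i a = 1)
    (g : (∀ i, V i) → ℝ) {S U₁ U₂ : Finset (Fin k)} (hU₁ : U₁ ⊆ S) (hU₂ : U₂ ⊆ S) :
    inner' (prodMeasure μi)
        (esComp μi S fun z => traceComp μi g S U₁ z * traceComp μi g S U₂ z)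
        (esComp μi S fun z => traceComp μi g S U₁ z * traceComp μi g S U₂ z)
      ≤ inner' (prodMeasure μi) (avg μi (U₁ ∩ U₂) fun z => traceComp μi g S U₁ z ^ 2)
          (avg μi (U₁ ∩ U₂) fun z => traceComp μi g S U₂ z ^ 2) := by
  set u := fun z => traceComp μi g S U₁ z * traceComp μi g S U₂ z
  have hproj : esComp μi S u = esComp μi S (avg μi S u) :=
    funext fun y => by rw [esComp_avg hsum, if_pos subset_rfl]
  calc _ ≤ inner' (prodMeasure μi) (avg μi S u) (avg μi S u) :=
        hproj ▸ inner'_esComp_self_le hnn hsum S _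
    _ ≤ inner' (prodMeasure μi) (avg μi S fun z => traceComp μi g S U₁ z ^ 2)
          (avg μi S fun z => traceComp μi g S U₂ z ^ 2) :=
        sum_le_sum fun x _ => mul_le_mul_of_nonneg_left
          ((sq (avg μi S u x)).symm.trans_le (sq_avg_mul_le hnn S _ _ x))
          (prodMeasure_nonneg hnn x)
    _ = _ := by
        rw [avg_traceComp_sq_of_subset hsum g hU₁, avg_traceComp_sq_of_subset hsum g hU₂,
          inner'_avg_avg hsum]

lemma inner'_esComp_sq_le (hnn : ∀ i a, 0 ≤ μi i a) (hsum : ∀ i, ∑ a, μi i a = 1) {η : ℝ}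
    (hη : 0 < η) (g : (∀ i, V i) → ℝ) (S : Finset (Fin k)) :
    inner' (prodMeasure μi) (esComp μi S fun z => g z ^ 2) (esComp μi S fun z => g z ^ 2)
      ≤ ∑ p ∈ unionPairs S, (2 * η + η ^ 2) ^ #S / η ^ (#p.1 + #p.2) *
          ∑ T₁ with T₁ ∩ S = p.1, ∑ T₂ with T₂ ∩ S = p.2,
            inner' (prodMeasure μi) (avg μi (p.1 ∩ p.2) fun z => esComp μi T₁ g z ^ 2)
              (avg μi (p.1 ∩ p.2) fun z => esComp μi T₂ g z ^ 2) := by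
  rw [funext (esComp_sq_eq_sum_unionPairs hsum g S)]
  refine (inner'_sum_self_le (prodMeasure_nonneg hnn) _ _ (w := fun p => η ^ (#p.1 + #p.2))
    fun p _ => pow_pos hη _).trans ?_
  rw [sum_unionPairs_pow, mul_sum]
  refine sum_le_sum fun p hp => ?_
  have hU := mem_unionPairs.1 hp
  have hsplit := inner'_esComp_traceComp_mul_le hnn hsum g (hU ▸ subset_union_left)
    (hU ▸ subset_union_right)
  rw [funext (avg_traceComp_sq hsum g inter_subset_left),
    funext (avg_traceComp_sq hsum g inter_subset_right), inner'_sum_left] at hsplit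
  simp only [inner'_sum_right] at hsplit
  rw [mul_div_assoc', mul_comm _ (inner' _ _ _), mul_div_assoc, mul_comm]
  exact mul_le_mul_of_nonneg_left hsplit (by positivity)

lemma expect_influence_sq (hsum : ∀ i, ∑ a, μi i a = 1) (R : Finset (Fin k))
    (g : (∀ i, V i) → ℝ) :
    expect (prodMeasure μi) (fun x => influence μi R g x ^ 2)
      = ∑ T₁ with R ⊆ T₁, ∑ T₂ with R ⊆ T₂,
          inner' (prodMeasure μi) (avg μi R fun z => esComp μi T₁ g z ^ 2)
            (avg μi R fun z => esComp μi T₂ g z ^ 2) := by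
  have hsq : expect (prodMeasure μi) (fun x => influence μi R g x ^ 2)
      = inner' (prodMeasure μi) (influence μi R g) (influence μi R g) :=
    sum_congr rfl fun x _ => by simp only [sq]
  rw [hsq, funext (influence_eq_sum hsum R g), inner'_sum_left]
  simp only [inner'_sum_right]

theorem norm4p4_le_sum_expect_influence_sq (hnn : ∀ i a, 0 ≤ μi i a)
    (hsum : ∀ i, ∑ a, μi i a = 1) {η : ℝ} (hη : 0 < η) {d : ℕ} {g : (∀ i, V i) → ℝ}
    (hg : ∀ T, d < #T → ∀ x, esComp μi T g x = 0) :
    norm4p4 (prodMeasure μi) g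
      ≤ ∑ R with #R ≤ d, ((2 + η) / η) ^ #R * (3 + η) ^ (2 * (d - #R)) *
          expect (prodMeasure μi) (fun x => influence μi R g x ^ 2) := by
  have hzero : ∀ R T, d < #T → (avg μi R fun z => esComp μi T g z ^ 2) = fun _ => 0 :=
    fun R T hT => funext fun x => by simp [avg, hg T hT]
  have hfourth : norm4p4 (prodMeasure μi) g
      = inner' (prodMeasure μi) (fun z => g z ^ 2) (fun z => g z ^ 2) :=
    sum_congr rfl fun x _ => by ring
  rw [hfourth, inner'_self_eq_sum_esComp hsum]
  refine (sum_le_sum fun S _ => inner'_esComp_sq_le hnn hsum hη g S).trans ?_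
  refine (sum_sum_unionPairs_le hη d (fun R T₁ T₂ => inner' (prodMeasure μi)
        (avg μi R fun z => esComp μi T₁ g z ^ 2) (avg μi R fun z => esComp μi T₂ g z ^ 2))
        (fun R T₁ T₂ => inner'_nonneg (prodMeasure_nonneg hnn)
          (avg_nonneg hnn fun _ => sq_nonneg _) (avg_nonneg hnn fun _ => sq_nonneg _))
        fun R T₁ T₂ hT => by
          rcases hT with hT | hT <;> simp [inner', hzero R _ hT]).trans_eq ?_
  simp only [expect_influence_sq hsum]

end MainInequality

lemma one_add_inv_pow_le_two {d : ℕ} (hd : 0 < d) : (1 + (3 * (d : ℝ))⁻¹) ^ (2 * d) ≤ 2 := by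
  have hd' : (0 : ℝ) < d := Nat.cast_pos.2 hd
  calc (1 + (3 * (d : ℝ))⁻¹) ^ (2 * d) ≤ Real.exp (3 * (d : ℝ))⁻¹ ^ (2 * d) :=
        pow_le_pow_left₀ (by positivity) (by linarith [Real.add_one_le_exp (3 * (d : ℝ))⁻¹]) _
    _ = Real.exp (2 / 3) := by
        rw [← Real.exp_nat_mul]
        congr 1
        push_cast
        field_simp
    _ ≤ Real.exp (Real.log 2) := Real.exp_le_exp.2 (by linarith [Real.log_two_gt_d9])
    _ = 2 := Real.exp_log two_pos

lemma two_add_div_pow_mul_three_add_pow_le {d r : ℕ} (hr : r ≤ d) :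
    ((2 + (max (d : ℝ) 1)⁻¹) / (max (d : ℝ) 1)⁻¹) ^ r * (3 + (max (d : ℝ) 1)⁻¹) ^ (2 * (d - r))
      ≤ 2 * 9 ^ d * (9 * (d : ℝ)) ^ r := by
  rcases Nat.eq_zero_or_pos d with rfl | hd
  · obtain rfl : r = 0 := Nat.le_zero.1 hr
    norm_num
  have hd1 : (1 : ℝ) ≤ d := Nat.one_le_cast.2 hd
  rw [max_eq_left hd1]
  have hfirst : (2 + (d : ℝ)⁻¹) / (d : ℝ)⁻¹ ≤ 9 * d := by
    rw [div_inv_eq_mul, add_mul, inv_mul_cancel₀ (by positivity)]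
    linarith
  have hsecond : (3 + (d : ℝ)⁻¹) ^ (2 * (d - r)) ≤ 2 * 9 ^ d :=
    calc (3 + (d : ℝ)⁻¹) ^ (2 * (d - r)) ≤ (3 + (d : ℝ)⁻¹) ^ (2 * d) :=
          pow_le_pow_right₀ (by linarith [inv_nonneg.2 (Nat.cast_nonneg (α := ℝ) d)]) (by omega)
      _ = 9 ^ d * (1 + (3 * (d : ℝ))⁻¹) ^ (2 * d) := by
          rw [show (3 : ℝ) + (d : ℝ)⁻¹ = 3 * (1 + (3 * (d : ℝ))⁻¹) by field_simp, mul_pow,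
            pow_mul]
          norm_num
      _ ≤ 9 ^ d * 2 := mul_le_mul_of_nonneg_left (one_add_inv_pow_le_two hd) (by positivity)
      _ = 2 * 9 ^ d := mul_comm _ _
  calc _ ≤ (9 * (d : ℝ)) ^ r * (2 * 9 ^ d) :=
        mul_le_mul (pow_le_pow_left₀ (by positivity) hfirst r) hsecond (by positivity)
          (by positivity)
    _ = _ := by ring

theorem statement5_general (k : ℕ)
    (V : Fin k → Type) [∀ i, Fintype (V i)] [∀ i, DecidableEq (V i)]
    (μi : ∀ i, V i → ℝ) (hnn : ∀ i x, 0 ≤ μi i x) (hsum : ∀ i, ∑ x, μi i x = 1)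
    (d : ℕ) (f : (∀ i, V i) → ℝ) (hdeg : DegLe (prodMeasure μi) d f) :
    norm4p4 (prodMeasure μi) f ≤
      2 * 9 ^ d *
        ∑ T ∈ univ.powerset.filter (fun T : Finset (Fin k) => T.card ≤ d),
          (9 * (d : ℝ)) ^ T.card *
            expect (prodMeasure μi) (fun x => (Inf (prodMeasure μi) T f x) ^ 2) := by
  rw [← norm4p4_truncate hsum hdeg, powerset_univ, mul_sum]
  refine (norm4p4_le_sum_expect_influence_sq hnn hsum (η := (max (d : ℝ) 1)⁻¹) (by positivity)
    fun T hT => esComp_truncate_eq_zero hsum hT f).trans (sum_le_sum fun R hR => ?_)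
  rw [expect_influence_truncate_sq hsum hdeg R, ← mul_assoc]
  exact mul_le_mul_of_nonneg_right (two_add_div_pow_mul_three_add_pow_le (mem_filter.1 hR).2)
    (sum_nonneg fun x _ => mul_nonneg (prodMeasure_nonneg hnn x) (sq_nonneg _))

theorem statement5 (k : ℕ) (hk : 1 ≤ k)
    (V : Fin k → Type) [∀ i, Fintype (V i)] [∀ i, DecidableEq (V i)]
    (μi : ∀ i, V i → ℝ) (hnn : ∀ i x, 0 ≤ μi i x) (hsum : ∀ i, ∑ x, μi i x = 1)
    (d : ℕ) (f : (∀ i, V i) → ℝ) (hdeg : DegLe (prodMeasure μi) d f) :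
    norm4p4 (prodMeasure μi) f ≤
      2 * 9 ^ d *
        ∑ T ∈ univ.powerset.filter (fun T : Finset (Fin k) => T.card ≤ d),
          (9 * (d : ℝ)) ^ T.card *
            expect (prodMeasure μi) (fun x => (Inf (prodMeasure μi) T f x) ^ 2) :=
  statement5_general k V μi hnn hsum d f hdeg

end GLL
end

section
/- Let μ be an ε-product probability measure on V = V₁×⋯×V_k, let S,T ⊆ [k] be disjoint, and let f ∈ L²(V_S,μ_S). Then ‖A_{S,T}f − E_{μ_S}[f]‖²_{L²(μ_T)} ≤ |S|·|T|·ε²·‖f‖²_{L²(μ_S)}, where E_{μ_S}[f] denotes the constant function with value E_{x∼μ_S}[f(x)]. -/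
/-!
Write `ν_x` for the link of `μ` at `x_T`. Adding a coordinate `j ∉ T` to `T` increases
`‖A_T f‖²` by the average over `x` of the variance of `A_j f` in the link `ν_x`, and there
`Var (A_j f) = Cov (f, A_j f)`. For an `S`-junta `f` and a `{j}`-junta `g` one has
`|Cov (f, g)| ≤ √|S| ε ‖f‖ √(Var g)`: conditioning on all coordinates of `S` but one, `i`,
the law of total covariance splits `Cov (f, g)` into the average conditional covariance,
bounded by the `ε`-pseudorandomness of the `{i, j}`-skeleton of the link, and the covariance
of the averaged function, bounded by induction on `|S|`; Cauchy–Schwarz merges the two.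
So each coordinate of `T` adds at most `|S| ε² ‖f‖²` to `‖A_T f‖²`, which is `E[f]²` for
`T = ∅`, and `‖A_T f - E f‖² = ‖A_T f‖² - E[f]²` because `E[A_T f] = E[f]`.
-/

open Finset

namespace GLL

lemma sqrt_add_mul_sqrt_le {a b : ℝ} (c : ℝ) (ha : 0 ≤ a) (hb : 0 ≤ b) :
    √a + c * √b ≤ √(1 + c ^ 2) * √(a + b) := by
  rw [← Real.sqrt_mul (by positivity)]
  apply Real.le_sqrt_of_sq_le
  nlinarith [sq_nonneg (c * √a - √b), Real.sq_sqrt ha, Real.sq_sqrt hb]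

lemma le_sq_of_le_mul_sqrt {a c : ℝ} (ha : 0 ≤ a) (hc : 0 ≤ c) (h : a ≤ c * √a) :
    a ≤ c ^ 2 := by
  have hs : √a ≤ c := by
    rcases (Real.sqrt_nonneg a).eq_or_lt with hs | hs
    · exact hs ▸ hc
    · exact le_of_mul_le_mul_right (by rwa [Real.mul_self_sqrt ha]) hs
  calc a = √a ^ 2 := (Real.sq_sqrt ha).symm
    _ ≤ c ^ 2 := by gcongr

lemma agree_iff_of_agree {ι : Type*} {β : ι → Type*} {S : Finset ι} {x y z : ∀ i, β i}
    (h : ∀ i ∈ S, x i = y i) : (∀ i ∈ S, z i = x i) ↔ ∀ i ∈ S, z i = y i :=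
  ⟨fun hz i hi => (hz i hi).trans (h i hi), fun hz i hi => (hz i hi).trans (h i hi).symm⟩

variable {k : ℕ} {V : Fin k → Type} [∀ i, Fintype (V i)]
  {μ ν f g F G : (∀ i, V i) → ℝ} {ε : ℝ} {i j : Fin k}

lemma expect_sub : expect ν (fun x => F x - G x) = expect ν F - expect ν G := by
  simp only [expect, mul_sub, sum_sub_distrib]

lemma expect_congr_s9 (h : ∀ z, ν z ≠ 0 → F z = G z) : expect ν F = expect ν G :=
  sum_congr rfl fun z _ => by
    rcases eq_or_ne (ν z) 0 with hz | hz
    · simp [hz]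
    · rw [h z hz]

lemma expect_le_expect (h0 : ∀ x, 0 ≤ ν x) (h : ∀ z, ν z ≠ 0 → F z ≤ G z) :
    expect ν F ≤ expect ν G :=
  sum_le_sum fun z _ => by
    rcases eq_or_ne (ν z) 0 with hz | hz
    · simp [hz]
    · exact mul_le_mul_of_nonneg_left (h z hz) (h0 z)

lemma expect_nonneg (h0 : ∀ x, 0 ≤ ν x) (hF : ∀ x, 0 ≤ F x) : 0 ≤ expect ν F :=
  sum_nonneg fun x _ => mul_nonneg (h0 x) (hF x)

lemma expect_const (h1 : ∑ x, ν x = 1) (c : ℝ) : expect ν (fun _ => c) = c := by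
  simp [expect, ← sum_mul, h1]

lemma expect_mul_left (c : ℝ) : expect ν (fun x => c * F x) = c * expect ν F := by
  simp only [expect, mul_sum]
  exact sum_congr rfl fun x _ => by ring

lemma normSq_eq_expect : normSq ν f = expect ν (fun x => f x ^ 2) := rfl

lemma normSq_nonneg (h0 : ∀ x, 0 ≤ ν x) : 0 ≤ normSq ν f :=
  expect_nonneg h0 fun _ => sq_nonneg _

lemma abs_expect_le_mul_sqrt {a b c : (∀ i, V i) → ℝ} (h0 : ∀ x, 0 ≤ μ x)
    (hε : 0 ≤ ε) (ha : ∀ x, 0 ≤ a x) (hb : ∀ x, 0 ≤ b x)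
    (hc : ∀ x, μ x ≠ 0 → |c x| ≤ ε * √(a x * b x)) :
    |expect μ c| ≤ ε * √(expect μ a) * √(expect μ b) :=
  calc |expect μ c| ≤ ∑ x, |μ x * c x| := abs_sum_le_sum_abs _ _
    _ ≤ ∑ x, ε * (√(μ x * a x) * √(μ x * b x)) := sum_le_sum fun x _ => by
        rcases eq_or_ne (μ x) 0 with hx | hx
        · simp [hx]
        rw [abs_mul, abs_of_nonneg (h0 x), ← Real.sqrt_mul (mul_nonneg (h0 x) (ha x)),
          show μ x * a x * (μ x * b x) = μ x ^ 2 * (a x * b x) by ring,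
          Real.sqrt_mul (sq_nonneg _), Real.sqrt_sq (h0 x), mul_left_comm]
        exact mul_le_mul_of_nonneg_left (hc x hx) (h0 x)
    _ ≤ ε * (√(expect μ a) * √(expect μ b)) := by
        rw [← mul_sum]
        exact mul_le_mul_of_nonneg_left (Real.sum_sqrt_mul_sqrt_le _
          (fun x => mul_nonneg (h0 x) (ha x)) fun x => mul_nonneg (h0 x) (hb x)) hε
    _ = ε * √(expect μ a) * √(expect μ b) := (mul_assoc _ _ _).symm

def cov (ν f g : (∀ i, V i) → ℝ) : ℝ :=
  expect ν (fun x => f x * g x) - expect ν f * expect ν g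

def var (ν f : (∀ i, V i) → ℝ) : ℝ := normSq ν f - expect ν f ^ 2

lemma cov_congr (hf : ∀ z, ν z ≠ 0 → f z = F z) (hg : ∀ z, ν z ≠ 0 → g z = G z) :
    cov ν f g = cov ν F G := by
  simp only [cov, expect_congr_s9 hf, expect_congr_s9 hg,
    expect_congr_s9 (F := fun x => f x * g x) fun z hz => by rw [hf z hz, hg z hz]]

lemma var_congr (hf : ∀ z, ν z ≠ 0 → f z = F z) : var ν f = var ν F := by
  simp only [var, normSq_eq_expect, expect_congr_s9 hf,
    expect_congr_s9 (F := fun x => f x ^ 2) fun z hz => by rw [hf z hz]]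

lemma cov_of_junta_empty (h1 : ∑ x, ν x = 1) (hf : Junta ∅ f) : cov ν f g = 0 := by
  rcases isEmpty_or_nonempty (∀ i, V i) with h | h
  · simp [cov, expect]
  · obtain ⟨x₀⟩ := h
    have hc : f = fun _ => f x₀ := funext fun x => hf x x₀ (by simp)
    rw [hc]
    simp only [cov, expect_const h1]
    simp [expect, mul_sum, mul_left_comm]

lemma var_eq_expect_sq (h1 : ∑ x, ν x = 1) :
    var ν f = expect ν (fun x => (f x - expect ν f) ^ 2) := by
  have expand : expect ν (fun x => (f x - expect ν f) ^ 2) = ∑ x,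
      (ν x * f x ^ 2 - 2 * expect ν f * (ν x * f x) + expect ν f ^ 2 * ν x) :=
    sum_congr rfl fun x _ => by ring
  rw [expand, sum_add_distrib, sum_sub_distrib, ← mul_sum, ← mul_sum, h1, var]
  simp only [expect, normSq]
  ring

lemma var_nonneg (hν : IsProb ν) : 0 ≤ var ν f := by
  rw [var_eq_expect_sq hν.2]
  exact sum_nonneg fun x _ => mul_nonneg (hν.1 x) (sq_nonneg _)

lemma PairPseudo.abs_cov_le (hP : PairPseudo ν ε i j)
    (f₁ : V i → ℝ) (f₂ : V j → ℝ) (hf : ∀ z, ν z ≠ 0 → f z = f₁ (z i))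
    (hg : ∀ z, ν z ≠ 0 → g z = f₂ (z j)) :
    |cov ν f g| ≤ ε * √(var ν f * var ν g) := by
  rw [cov_congr hf hg, var_congr hf, var_congr hg]
  exact hP f₁ f₂

variable [∀ i, DecidableEq (V i)] {S T : Finset (Fin k)} {x y z : ∀ i, V i}

lemma marg_nonneg (h0 : ∀ x, 0 ≤ μ x) : 0 ≤ marg μ S x :=
  sum_nonneg fun z _ => by split_ifs <;> simp [h0 z]

lemma le_marg (h0 : ∀ x, 0 ≤ μ x) : μ x ≤ marg μ S x := by
  have := single_le_sum (f := fun z => if ∀ i ∈ S, z i = x i then μ z else 0)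
    (fun z _ => by split_ifs <;> simp [h0 z]) (mem_univ x)
  simpa [marg] using this

lemma marg_pos (h0 : ∀ x, 0 ≤ μ x) (hx : μ x ≠ 0) : 0 < marg μ S x :=
  ((h0 x).lt_of_ne' hx).trans_le (le_marg h0)

lemma marg_empty : marg μ ∅ x = ∑ z, μ z := by
  simp [marg]

lemma marg_congr (h : ∀ i ∈ S, x i = y i) : marg μ S x = marg μ S y := by
  simp only [marg, agree_iff_of_agree h]

lemma exists_of_marg_ne_zero (hm : marg μ S x ≠ 0) :
    ∃ z, (∀ i ∈ S, z i = x i) ∧ μ z ≠ 0 := by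
  obtain ⟨z, -, hz⟩ := exists_ne_zero_of_sum_ne_zero hm
  by_cases hzx : ∀ i ∈ S, z i = x i
  · rw [if_pos hzx] at hz
    exact ⟨z, hzx, hz⟩
  · simp [hzx] at hz

lemma cond_congr (h : ∀ i ∈ S, x i = y i) : cond μ S x = cond μ S y := by
  funext z
  simp only [cond, marg_congr (μ := μ) h, agree_iff_of_agree h]

lemma cond_nonneg (h0 : ∀ x, 0 ≤ μ x) : 0 ≤ cond μ S x z := by
  unfold cond
  split_ifs
  · exact div_nonneg (h0 z) (marg_nonneg h0)
  · exact le_rfl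

lemma agree_of_cond_ne_zero (h : cond μ S x z ≠ 0) : ∀ i ∈ S, z i = x i := by
  by_contra hz
  simp [cond, hz] at h

lemma cond_of_marg_eq_zero (hm : marg μ S x = 0) : cond μ S x = 0 := by
  funext z
  simp [cond, hm]

lemma sum_cond (hm : marg μ S x ≠ 0) : ∑ z, cond μ S x z = 1 := by
  have : ∀ z, cond μ S x z = (if ∀ i ∈ S, z i = x i then μ z else 0) / marg μ S x :=
    fun z => by unfold cond; split_ifs <;> simp
  simp only [this, ← sum_div]
  exact div_self hm

lemma isProb_cond (h0 : ∀ x, 0 ≤ μ x) (hm : 0 < marg μ S x) : IsProb (cond μ S x) :=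
  ⟨fun _ => cond_nonneg h0, sum_cond hm.ne'⟩

lemma mul_cond_comm : μ x * cond μ S x z = μ z * cond μ S z x := by
  by_cases h : ∀ i ∈ S, z i = x i
  · have h' : ∀ i ∈ S, x i = z i := fun i hi => (h i hi).symm
    simp only [cond, if_pos h, if_pos h', marg_congr h]
    ring
  · have h' : ¬ ∀ i ∈ S, x i = z i := fun h' => h fun i hi => (h' i hi).symm
    simp [cond, h, h']

lemma mul_sum_cond (h0 : ∀ x, 0 ≤ μ x) : μ x * ∑ z, cond μ S x z = μ x := by
  rcases eq_or_ne (marg μ S x) 0 with hm | hm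
  · have : μ x = 0 := le_antisymm (hm ▸ le_marg h0) (h0 x)
    simp [this]
  · rw [sum_cond hm, mul_one]

lemma cond_cond (hm : marg μ T y ≠ 0) (hx : ∀ i ∈ T, x i = y i) :
    cond (cond μ T y) S x = cond μ (S ∪ T) x := by
  have agree (z : ∀ i, V i) :
      ((∀ i ∈ S, z i = x i) ∧ ∀ i ∈ T, z i = y i) ↔ ∀ i ∈ S ∪ T, z i = x i := by
    simp only [mem_union, or_imp, forall_and]
    exact and_congr_right' (agree_iff_of_agree fun i hi => (hx i hi).symm)
  have hmarg : marg (cond μ T y) S x = marg μ (S ∪ T) x / marg μ T y := by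
    simp only [marg, cond, ← agree, ite_and, sum_div, ite_div, zero_div]
  funext z
  simp only [cond, hmarg, ← agree, ite_and]
  split_ifs <;> simp [div_div_div_cancel_right₀ hm]

lemma Aop_eq_expect : Aop μ S F x = expect (cond μ S x) F := rfl

lemma Aop_of_junta (hG : Junta S G) : Aop μ S G x = G x * ∑ z, cond μ S x z := by
  rw [mul_sum]
  refine sum_congr rfl fun z _ => ?_
  rcases eq_or_ne (cond μ S x z) 0 with hz | hz
  · simp [hz]
  · rw [hG z x (agree_of_cond_ne_zero hz), mul_comm]

lemma junta_Aop : Junta S (Aop μ S F) := fun x y h => by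
  simp only [Aop, cond_congr (μ := μ) h]

lemma Aop_empty (h1 : ∑ x, μ x = 1) : Aop μ ∅ F x = expect μ F := by
  simp [Aop, cond, marg_empty, h1, expect]

lemma expect_Aop_mul (h0 : ∀ x, 0 ≤ μ x) (hG : Junta S G) :
    expect μ (fun x => Aop μ S F x * G x) = expect μ (fun x => F x * G x) :=
  calc expect μ (fun x => Aop μ S F x * G x)
      = ∑ x, ∑ z, μ z * cond μ S z x * F z * G x := by
        simp only [expect, Aop, sum_mul, mul_sum]
        exact sum_congr rfl fun x _ => sum_congr rfl fun z _ => by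
          rw [← mul_assoc, mul_cond_comm]; ring
    _ = ∑ z, μ z * F z * Aop μ S G z := by
        rw [sum_comm]
        simp only [Aop, mul_sum]
        exact sum_congr rfl fun z _ => sum_congr rfl fun x _ => by ring
    _ = expect μ (fun x => F x * G x) := by
        simp only [expect, Aop_of_junta hG]
        exact sum_congr rfl fun z _ => by
          linear_combination (F z * G z) * mul_sum_cond h0 (S := S) (x := z)

lemma expect_Aop (h0 : ∀ x, 0 ≤ μ x) : expect μ (Aop μ S F) = expect μ F := by
  simpa using expect_Aop_mul (F := F) h0 (G := fun _ => 1) fun _ _ _ => rfl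

lemma Aop_cond (hm : marg μ T x ≠ 0) (hz : ∀ i ∈ T, z i = x i) :
    Aop (cond μ T x) S F z = Aop μ (S ∪ T) F z := by
  simp only [Aop, cond_cond hm hz]

lemma Aop_Aop_of_subset {T' : Finset (Fin k)} (h0 : ∀ x, 0 ≤ μ x) (hT : T ⊆ T') :
    Aop μ T (Aop μ T' F) x = Aop μ T F x := by
  rcases eq_or_ne (marg μ T x) 0 with hm | hm
  · simp [Aop, cond_of_marg_eq_zero hm]
  have hA : ∀ z, cond μ T x z ≠ 0 → Aop μ T' F z = Aop (cond μ T x) (T' \ T) F z :=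
    fun z hz => by rw [Aop_cond hm (agree_of_cond_ne_zero hz), sdiff_union_of_subset hT]
  rw [Aop_eq_expect, expect_congr_s9 hA, expect_Aop fun _ => cond_nonneg h0, Aop_eq_expect]

lemma var_cond_nonneg (h0 : ∀ x, 0 ≤ μ x) : 0 ≤ var (cond μ S x) f := by
  rcases (marg_nonneg (S := S) (x := x) h0).eq_or_lt with hm | hm
  · simp [var, normSq, expect, cond_of_marg_eq_zero hm.symm]
  · exact var_nonneg (isProb_cond h0 hm)

lemma cov_eq_expect_cov_cond_add (h0 : ∀ x, 0 ≤ μ x) :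
    cov μ f g = expect μ (fun x => cov (cond μ S x) f g) + cov μ (Aop μ S f) g := by
  have hAf : expect μ (fun x => Aop μ S f x * Aop μ S g x)
      = expect μ (fun x => Aop μ S f x * g x) := by
    simpa only [mul_comm] using expect_Aop_mul (S := S) (F := g) h0 (junta_Aop (μ := μ) (F := f))
  simp only [cov, ← Aop_eq_expect, expect_sub, expect_Aop h0, hAf]
  ring

lemma expect_var_cond (h0 : ∀ x, 0 ≤ μ x) :
    expect μ (fun x => var (cond μ S x) f) = normSq μ f - normSq μ (Aop μ S f) := by
  simp only [var, normSq_eq_expect, ← Aop_eq_expect, expect_sub, expect_Aop h0]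

lemma expect_var_cond_le (hμ : IsProb μ) : expect μ (fun x => var (cond μ S x) f) ≤ var μ f := by
  have := var_nonneg hμ (f := Aop μ S f)
  rw [var, expect_Aop hμ.1] at this
  rw [expect_var_cond hμ.1, var]
  linarith

lemma abs_cov_cond_le (hP : PairPseudo (cond μ S x) ε i j)
    (hf : Junta (insert i S) f) (hg : Junta {j} g) :
    |cov (cond μ S x) f g| ≤ ε * √(var (cond μ S x) f * var (cond μ S x) g) := by
  refine hP.abs_cov_le (fun a => f (Function.update x i a)) (fun a => g (Function.update x j a))
    (fun z hz => hf _ _ fun l hl => ?_) fun z _ => hg _ _ fun l hl => ?_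
  · rcases eq_or_ne l i with rfl | hli
    · simp
    · rw [Function.update_of_ne hli]
      exact agree_of_cond_ne_zero hz l ((mem_insert.1 hl).resolve_left hli)
  · rw [mem_singleton.1 hl, Function.update_self]

def LinkPseudo (μ : (∀ i, V i) → ℝ) (ε : ℝ) (S : Finset (Fin k)) (j : Fin k) : Prop :=
  ∀ S' ⊆ S, ∀ i ∈ S, i ∉ S' → ∀ x, 0 < marg μ S' x →
    PairPseudo (cond μ S' x) ε i j

lemma LinkPseudo.mono (h : LinkPseudo μ ε T j) (hST : S ⊆ T) :
    LinkPseudo μ ε S j := fun S' hS' i hi =>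
  h S' (hS'.trans hST) i (hST hi)

lemma EpsProduct.linkPseudo_cond (hprod : EpsProduct μ ε)
    (h0 : ∀ x, 0 ≤ μ x) (hST : Disjoint S T) (hjS : j ∉ S) (hjT : j ∉ T)
    (hx : 0 < marg μ T x) : LinkPseudo (cond μ T x) ε S j := by
  intro S' hS' i hiS hiS' x' hx'
  obtain ⟨z, hzx', hz⟩ := exists_of_marg_ne_zero hx'.ne'
  have hμz : μ z ≠ 0 := fun h => hz (by simp [cond, h])
  have hiU : i ∉ S' ∪ T := by
    simp only [mem_union, not_or]
    exact ⟨hiS', disjoint_left.1 hST hiS⟩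
  have hjU : j ∉ S' ∪ T := by
    simp only [mem_union, not_or]
    exact ⟨fun h => hjS (hS' h), hjT⟩
  have hij : i ≠ j := ne_of_mem_of_not_mem hiS hjS
  have hcard : (S' ∪ T).card ≤ k - 2 := by
    have := card_le_univ (insert i (insert j (S' ∪ T)))
    rw [card_insert_of_notMem (by simp [hij, hiU]), card_insert_of_notMem hjU,
      Fintype.card_fin] at this
    omega
  rw [cond_congr fun l hl => (hzx' l hl).symm, cond_cond hx.ne' (agree_of_cond_ne_zero hz)]
  exact hprod _ hcard z (marg_pos h0 hμz) i j hiU hjU hij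

lemma abs_cov_le (hμ : IsProb μ) (hε : 0 ≤ ε) (hg : Junta {j} g)
    (hRP : LinkPseudo μ ε S j) (hf : Junta S f) :
    |cov μ f g| ≤ √S.card * ε * √(normSq μ f) * √(var μ g) := by
  induction S using Finset.induction_on generalizing f with
  | empty => simp [cov_of_junta_empty hμ.2 hf]
  | @insert i S hi IH =>
    have hlocal : |expect μ (fun x => cov (cond μ S x) f g)|
        ≤ ε * √(expect μ (fun x => var (cond μ S x) f)) *
          √(expect μ (fun x => var (cond μ S x) g)) :=
      abs_expect_le_mul_sqrt hμ.1 hε (fun _ => var_cond_nonneg hμ.1)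
        (fun _ => var_cond_nonneg hμ.1) fun x hx => abs_cov_cond_le
          (hRP S (subset_insert i S) i (mem_insert_self i S) hi x (marg_pos hμ.1 hx)) hf hg
    have hglobal := IH (hRP.mono (subset_insert i S)) (junta_Aop (μ := μ) (F := f))
    have hnorm_f : normSq μ f
        = expect μ (fun x => var (cond μ S x) f) + normSq μ (Aop μ S f) := by
      rw [expect_var_cond hμ.1]
      ring
    have hvar_f := expect_nonneg hμ.1 fun x => var_cond_nonneg hμ.1 (S := S) (x := x) (f := f)
    rw [cov_eq_expect_cov_cond_add hμ.1 (S := S)]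
    calc _ ≤ |expect μ (fun x => cov (cond μ S x) f g)| + |cov μ (Aop μ S f) g| :=
          abs_add_le _ _
      _ ≤ ε * √(expect μ (fun x => var (cond μ S x) f)) * √(var μ g)
            + √S.card * ε * √(normSq μ (Aop μ S f)) * √(var μ g) := by
          gcongr
          exact hlocal.trans (by gcongr; exact expect_var_cond_le hμ)
      _ = (√(expect μ (fun x => var (cond μ S x) f)) + √S.card * √(normSq μ (Aop μ S f)))
            * (ε * √(var μ g)) := by ring
      _ ≤ √(1 + √S.card ^ 2) * √(normSq μ f) * (ε * √(var μ g)) := by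
          refine mul_le_mul_of_nonneg_right ?_ (by positivity)
          rw [hnorm_f]
          exact sqrt_add_mul_sqrt_le _ hvar_f (normSq_nonneg hμ.1)
      _ = √(insert i S).card * ε * √(normSq μ f) * √(var μ g) := by
          rw [Real.sq_sqrt (Nat.cast_nonneg _), card_insert_of_notMem hi]
          push_cast
          ring_nf

lemma var_Aop_singleton_le (hμ : IsProb μ) (hε : 0 ≤ ε)
    (hRP : LinkPseudo μ ε S j) (hf : Junta S f) :
    var μ (Aop μ {j} f) ≤ S.card * ε ^ 2 * normSq μ f := by
  set g := Aop μ {j} f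
  have hcov : cov μ f g = var μ g := by
    have hfg : expect μ (fun x => f x * g x) = normSq μ g := by
      rw [← expect_Aop_mul hμ.1 junta_Aop, normSq_eq_expect]
      simp only [g, sq]
    rw [cov, var, hfg, expect_Aop hμ.1]
    ring
  have h := abs_cov_le hμ hε (junta_Aop : Junta {j} g) hRP hf
  rw [hcov, abs_of_nonneg (var_nonneg hμ)] at h
  convert le_sq_of_le_mul_sqrt (var_nonneg hμ) (by positivity) h using 1
  rw [mul_pow, mul_pow, Real.sq_sqrt (Nat.cast_nonneg _), Real.sq_sqrt (normSq_nonneg hμ.1)]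

lemma var_cond_Aop_insert_le (hμ : IsProb μ) (hε : 0 ≤ ε)
    (hprod : EpsProduct μ ε) (hST : Disjoint S T) (hjS : j ∉ S) (hjT : j ∉ T)
    (hf : Junta S f) (hx : 0 < marg μ T x) :
    var (cond μ T x) (Aop μ (insert j T) f) ≤
      S.card * ε ^ 2 * Aop μ T (fun z => f z ^ 2) x := by
  have hA : ∀ z, cond μ T x z ≠ 0 → Aop μ (insert j T) f z = Aop (cond μ T x) {j} f z :=
    fun z hz => by rw [Aop_cond hx.ne' (agree_of_cond_ne_zero hz), insert_eq]
  rw [var_congr hA]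
  exact var_Aop_singleton_le (isProb_cond hμ.1 hx) hε
    (hprod.linkPseudo_cond hμ.1 hST hjS hjT hx) hf

lemma normSq_Aop_insert_sub_le (hμ : IsProb μ) (hε : 0 ≤ ε)
    (hprod : EpsProduct μ ε) (hST : Disjoint S T) (hjS : j ∉ S) (hjT : j ∉ T)
    (hf : Junta S f) :
    normSq μ (Aop μ (insert j T) f) - normSq μ (Aop μ T f) ≤
      S.card * ε ^ 2 * normSq μ f := by
  have hAA : Aop μ T (Aop μ (insert j T) f) = Aop μ T f :=
    funext fun x => Aop_Aop_of_subset hμ.1 (subset_insert j T)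
  calc _ = expect μ (fun x => var (cond μ T x) (Aop μ (insert j T) f)) := by
        rw [expect_var_cond hμ.1, hAA]
    _ ≤ expect μ (fun x => S.card * ε ^ 2 * Aop μ T (fun z => f z ^ 2) x) :=
        expect_le_expect hμ.1 fun x hx =>
          var_cond_Aop_insert_le hμ hε hprod hST hjS hjT hf (marg_pos hμ.1 hx)
    _ = S.card * ε ^ 2 * normSq μ f := by
        rw [expect_mul_left, expect_Aop hμ.1, normSq_eq_expect]

lemma normSq_Aop_le (hμ : IsProb μ) (hε : 0 ≤ ε) (hprod : EpsProduct μ ε)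
    (hf : Junta S f) (hST : Disjoint S T) :
    normSq μ (Aop μ T f) ≤ expect μ f ^ 2 + S.card * T.card * ε ^ 2 * normSq μ f := by
  induction T using Finset.induction_on with
  | empty =>
    simp only [Aop_empty hμ.2, normSq_eq_expect, expect_const hμ.2]
    simp
  | @insert j T hjT IH =>
    have hST' : Disjoint S T := hST.mono_right (subset_insert j T)
    have hjS : j ∉ S := disjoint_right.1 hST (mem_insert_self j T)
    have hstep := normSq_Aop_insert_sub_le hμ hε hprod hST' hjS hjT hf
    rw [card_insert_of_notMem hjT]
    push_cast
    linarith [IH hST']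

theorem statement9_general (k : ℕ)
    (V : Fin k → Type) [∀ i, Fintype (V i)] [∀ i, DecidableEq (V i)]
    (μ : (∀ i, V i) → ℝ) (ε : ℝ) (hε : 0 ≤ ε) (hμ : IsProb μ) (hprod : EpsProduct μ ε)
    (S T : Finset (Fin k)) (hST : Disjoint S T)
    (f : (∀ i, V i) → ℝ) (hf : Junta S f) :
    normSq μ (fun x => Aop μ T f x - expect μ f) ≤
      (S.card : ℝ) * T.card * ε ^ 2 * normSq μ f := by
  have hE : expect μ (Aop μ T f) = expect μ f := expect_Aop hμ.1
  have hvar : normSq μ (fun x => Aop μ T f x - expect μ f) = var μ (Aop μ T f) := by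
    rw [var_eq_expect_sq hμ.2, hE, normSq_eq_expect]
  rw [hvar, var, hE]
  linarith [normSq_Aop_le hμ hε hprod hf hST]

theorem statement9 (k : ℕ) (hk : 1 ≤ k)
    (V : Fin k → Type) [∀ i, Fintype (V i)] [∀ i, DecidableEq (V i)]
    (μ : (∀ i, V i) → ℝ) (ε : ℝ) (hε : 0 ≤ ε) (hμ : IsProb μ) (hprod : EpsProduct μ ε)
    (S T : Finset (Fin k)) (hST : Disjoint S T)
    (f : (∀ i, V i) → ℝ) (hf : Junta S f) :
    normSq μ (fun x => Aop μ T f x - expect μ f) ≤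
      (S.card : ℝ) * T.card * ε ^ 2 * normSq μ f :=
  statement9_general k V μ ε hε hμ hprod S T hST f hf

end GLL
end
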